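/- arXiv:0905.4836 — 8 statements merged into one kernel-verified Lean document; each statement's English description precedes it below -/
import Mathlib

section
/- Let {x_n} be the sequence generated by the explicit viscosity-type iteration x_{n+1} = T(α_n Φ(x_n) + (1 − α_n) x_n) from a starting point x_0 ∈ C. Then for all n ≥ 1 one has ‖x_{n+1} − x_n‖ ≤ (1 − (1 − ρ)α_n)‖x_n − x_{n−1}‖ + |α_n − α_{n−1}| · ‖Φ(x_{n−1}) − x_{n−1}‖. -/
/-! Writing `y_n = α_n Φ(x_n) + (1 - α_n) x_n`, we have `x_{n+1} - x_n = T y_n - T y_{n-1}`, and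
`y_n - y_{n-1} = α_n (Φ x_n - Φ x_{n-1}) + (1 - α_n)(x_n - x_{n-1}) + (α_n - α_{n-1})(Φ x_{n-1} - x_{n-1})`.
Nonexpansiveness of `T` (the `y_n` lie in `C` by convexity), the triangle inequality and the
contraction property of `Φ` give the bound, since `α ρ + (1 - α) = 1 - (1 - ρ) α`. -/

section ViscosityStep

variable {E : Type*} [NormedAddCommGroup E] [NormedSpace ℝ E]

def viscosityStep (Φ : E → E) (a : ℝ) (u : E) : E := a • Φ u + (1 - a) • u

lemma viscosityStep_mem {C : Set E} (hC : Convex ℝ C) {Φ : E → E} {a : ℝ}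
    (ha : a ∈ Set.Icc (0 : ℝ) 1) {u : E} (hu : u ∈ C) (hΦu : Φ u ∈ C) :
    viscosityStep Φ a u ∈ C :=
  hC hΦu hu ha.1 (sub_nonneg.2 ha.2) (add_sub_cancel a 1)

lemma viscosityStep_sub_viscosityStep (Φ : E → E) (a b : ℝ) (u v : E) :
    viscosityStep Φ a u - viscosityStep Φ b v
      = a • (Φ u - Φ v) + (1 - a) • (u - v) + (a - b) • (Φ v - v) := by
  simp only [viscosityStep, smul_sub, sub_smul, one_smul]
  abel

lemma norm_viscosityStep_sub_le {Φ : E → E} {ρ a : ℝ} (ha : a ∈ Set.Icc (0 : ℝ) 1) (b : ℝ)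
    {u v : E} (hΦ : ‖Φ u - Φ v‖ ≤ ρ * ‖u - v‖) :
    ‖viscosityStep Φ a u - viscosityStep Φ b v‖
      ≤ (1 - (1 - ρ) * a) * ‖u - v‖ + |a - b| * ‖Φ v - v‖ := by
  rw [viscosityStep_sub_viscosityStep]
  calc _ ≤ ‖a • (Φ u - Φ v)‖ + ‖(1 - a) • (u - v)‖ + ‖(a - b) • (Φ v - v)‖ := norm_add₃_le
    _ = a * ‖Φ u - Φ v‖ + (1 - a) * ‖u - v‖ + |a - b| * ‖Φ v - v‖ := by
      rw [norm_smul, norm_smul, norm_smul, Real.norm_of_nonneg ha.1,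
        Real.norm_of_nonneg (sub_nonneg.2 ha.2), Real.norm_eq_abs]
    _ ≤ a * (ρ * ‖u - v‖) + (1 - a) * ‖u - v‖ + |a - b| * ‖Φ v - v‖ := by
      gcongr
      exact ha.1
    _ = (1 - (1 - ρ) * a) * ‖u - v‖ + |a - b| * ‖Φ v - v‖ := by ring

end ViscosityStep

theorem stmt_2_general
    {X : Type*} [NormedAddCommGroup X] [NormedSpace ℝ X]
    (C : Set X) (hconv : Convex ℝ C)
    (T Φ : X → X) (hΦ : ∀ x ∈ C, Φ x ∈ C)
    (hTne : ∀ x ∈ C, ∀ y ∈ C, ‖T x - T y‖ ≤ ‖x - y‖)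
    (ρ : ℝ)
    (hΦc : ∀ x ∈ C, ∀ y ∈ C, ‖Φ x - Φ y‖ ≤ ρ * ‖x - y‖)
    (α : ℕ → ℝ) (hα : ∀ n, α n ∈ Set.Ioo (0 : ℝ) 1)
    (x : ℕ → X) (hxC : ∀ n, x n ∈ C)
    (hrec : ∀ n, x (n + 1) = T (α n • Φ (x n) + (1 - α n) • x n)) :
    ∀ n : ℕ, 1 ≤ n →
      ‖x (n + 1) - x n‖ ≤ (1 - (1 - ρ) * α n) * ‖x n - x (n - 1)‖
        + |α n - α (n - 1)| * ‖Φ (x (n - 1)) - x (n - 1)‖ := by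
  intro n hn
  obtain ⟨m, rfl⟩ := Nat.exists_eq_add_of_le' hn
  have hαIcc (k : ℕ) : α k ∈ Set.Icc (0 : ℝ) 1 := Set.Ioo_subset_Icc_self (hα k)
  have hstep (k : ℕ) : viscosityStep Φ (α k) (x k) ∈ C :=
    viscosityStep_mem hconv (hαIcc k) (hxC k) (hΦ _ (hxC k))
  rw [Nat.add_sub_cancel]
  calc ‖x (m + 1 + 1) - x (m + 1)‖
      = ‖T (viscosityStep Φ (α (m + 1)) (x (m + 1))) - T (viscosityStep Φ (α m) (x m))‖ := by
        rw [viscosityStep, viscosityStep, ← hrec, ← hrec]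
    _ ≤ ‖viscosityStep Φ (α (m + 1)) (x (m + 1)) - viscosityStep Φ (α m) (x m)‖ :=
        hTne _ (hstep _) _ (hstep _)
    _ ≤ _ := norm_viscosityStep_sub_le (hαIcc _) _ (hΦc _ (hxC _) _ (hxC _))

theorem stmt_2
    {X : Type*} [NormedAddCommGroup X] [NormedSpace ℝ X]
    (C : Set X) (hC : C.Nonempty) (hconv : Convex ℝ C)
    (T Φ : X → X) (hT : ∀ x ∈ C, T x ∈ C) (hΦ : ∀ x ∈ C, Φ x ∈ C)
    (hTne : ∀ x ∈ C, ∀ y ∈ C, ‖T x - T y‖ ≤ ‖x - y‖)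
    (ρ : ℝ) (hρ : ρ ∈ Set.Ioo (0 : ℝ) 1)
    (hΦc : ∀ x ∈ C, ∀ y ∈ C, ‖Φ x - Φ y‖ ≤ ρ * ‖x - y‖)
    (α : ℕ → ℝ) (hα : ∀ n, α n ∈ Set.Ioo (0 : ℝ) 1)
    (x : ℕ → X) (hx0 : x 0 ∈ C) (hxC : ∀ n, x n ∈ C)
    (hrec : ∀ n, x (n + 1) = T (α n • Φ (x n) + (1 - α n) • x n)) :
    ∀ n : ℕ, 1 ≤ n →
      ‖x (n + 1) - x n‖ ≤ (1 - (1 - ρ) * α n) * ‖x n - x (n - 1)‖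
        + |α n - α (n - 1)| * ‖Φ (x (n - 1)) - x (n - 1)‖ :=
  stmt_2_general C hconv T Φ hΦ hTne ρ hΦc α hα x hxC hrec
end

section
/- Let {x_n} be the sequence generated by the explicit viscosity-type iteration x_{n+1} = T(α_n Φ(x_n) + (1 − α_n) x_n) from a starting point x_0 ∈ C, and suppose p ∈ C is a fixed point of T (Tp = p). Then for all n ≥ 0 one has ‖x_n − p‖ ≤ max{‖x_0 − p‖, ‖Φ(p) − p‖/(1 − ρ)}; in particular the sequence {x_n} is bounded. -/
/-! Each step of the iteration moves `‖x n - p‖` at most to the convex combination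
`(1 - α n (1 - ρ)) ‖x n - p‖ + α n (1 - ρ) K` with `K = ‖Φ p - p‖ / (1 - ρ)`, because `T` fixes `p`
and is nonexpansive while `Φ` pulls `x n` towards `Φ p` by the factor `ρ`.  A convex combination
never exceeds the larger of its two points, so `max ‖x 0 - p‖ K` bounds the whole sequence. -/

lemma le_max_of_le_convex_combo {d t : ℕ → ℝ} {K : ℝ} (ht0 : ∀ n, 0 ≤ t n) (ht1 : ∀ n, t n ≤ 1)
    (hd : ∀ n, d (n + 1) ≤ (1 - t n) * d n + t n * K) (n : ℕ) :
    d n ≤ max (d 0) K := by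
  induction n with
  | zero => exact le_max_left _ _
  | succ n ih =>
    calc d (n + 1) ≤ (1 - t n) * d n + t n * K := hd n
      _ ≤ (1 - t n) * max (d 0) K + t n * max (d 0) K := by
        gcongr
        · linarith [ht1 n]
        · exact ht0 n
        · exact le_max_right _ _
      _ = max (d 0) K := by ring

lemma norm_apply_sub_le_of_contraction_at {X : Type*} [SeminormedAddCommGroup X]
    {Φ : X → X} {ρ : ℝ} {x p : X} (hΦ : ‖Φ x - Φ p‖ ≤ ρ * ‖x - p‖) :
    ‖Φ x - p‖ ≤ ρ * ‖x - p‖ + ‖Φ p - p‖ :=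
  (norm_sub_le_norm_sub_add_norm_sub _ _ _).trans (by linarith)

section

variable {X : Type*} [SeminormedAddCommGroup X] [NormedSpace ℝ X]

lemma norm_combo_sub_le {a : ℝ} (ha0 : 0 ≤ a) (ha1 : a ≤ 1) (u v p : X) :
    ‖a • u + (1 - a) • v - p‖ ≤ a * ‖u - p‖ + (1 - a) * ‖v - p‖ := by
  have hsplit : a • u + (1 - a) • v - p = a • (u - p) + (1 - a) • (v - p) := by module
  rw [hsplit]
  exact convexOn_univ_norm.2 (Set.mem_univ _) (Set.mem_univ _) ha0 (by linarith) (by ring)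

variable {C : Set X} {T Φ : X → X} {ρ : ℝ} {p : X}

lemma norm_viscosity_step_sub_le (hconv : Convex ℝ C) (hΦ : ∀ x ∈ C, Φ x ∈ C)
    (hTne : ∀ x ∈ C, ∀ y ∈ C, ‖T x - T y‖ ≤ ‖x - y‖)
    (hΦc : ∀ x ∈ C, ∀ y ∈ C, ‖Φ x - Φ y‖ ≤ ρ * ‖x - y‖)
    (hp : p ∈ C) (hfp : T p = p) {a : ℝ} (ha0 : 0 ≤ a) (ha1 : a ≤ 1) {z : X} (hz : z ∈ C) :
    ‖T (a • Φ z + (1 - a) • z) - p‖ ≤ (1 - a * (1 - ρ)) * ‖z - p‖ + a * ‖Φ p - p‖ := by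
  have hyC : a • Φ z + (1 - a) • z ∈ C := hconv (hΦ z hz) hz ha0 (by linarith) (by ring)
  have hΦz := norm_apply_sub_le_of_contraction_at (hΦc z hz p hp)
  calc ‖T (a • Φ z + (1 - a) • z) - p‖
      ≤ ‖a • Φ z + (1 - a) • z - p‖ := by
        simpa only [hfp] using hTne _ hyC p hp
    _ ≤ a * ‖Φ z - p‖ + (1 - a) * ‖z - p‖ := norm_combo_sub_le ha0 ha1 _ _ _
    _ ≤ a * (ρ * ‖z - p‖ + ‖Φ p - p‖) + (1 - a) * ‖z - p‖ := by gcongr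
    _ = (1 - a * (1 - ρ)) * ‖z - p‖ + a * ‖Φ p - p‖ := by ring

end

theorem stmt_3_general
    {X : Type*} [NormedAddCommGroup X] [NormedSpace ℝ X]
    (C : Set X) (hconv : Convex ℝ C)
    (T Φ : X → X) (hΦ : ∀ x ∈ C, Φ x ∈ C)
    (hTne : ∀ x ∈ C, ∀ y ∈ C, ‖T x - T y‖ ≤ ‖x - y‖)
    (ρ : ℝ) (hρ : ρ ∈ Set.Ioo (0 : ℝ) 1)
    (hΦc : ∀ x ∈ C, ∀ y ∈ C, ‖Φ x - Φ y‖ ≤ ρ * ‖x - y‖)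
    (α : ℕ → ℝ) (hα : ∀ n, α n ∈ Set.Ioo (0 : ℝ) 1)
    (x : ℕ → X) (hxC : ∀ n, x n ∈ C)
    (hrec : ∀ n, x (n + 1) = T (α n • Φ (x n) + (1 - α n) • x n))
    (p : X) (hp : p ∈ C) (hfp : T p = p) :
    (∀ n, ‖x n - p‖ ≤ max ‖x 0 - p‖ (‖Φ p - p‖ / (1 - ρ))) ∧
      ∃ M : ℝ, ∀ n, ‖x n‖ ≤ M := by
  have hρ1 : 0 < 1 - ρ := sub_pos.2 hρ.2
  have hbound : ∀ n, ‖x n - p‖ ≤ max ‖x 0 - p‖ (‖Φ p - p‖ / (1 - ρ)) := by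
    refine le_max_of_le_convex_combo (t := fun n => α n * (1 - ρ))
      (fun n => by nlinarith [(hα n).1]) (fun n => by nlinarith [(hα n).1, (hα n).2, hρ.1])
      fun n => ?_
    rw [hrec n, mul_assoc, mul_div_cancel₀ _ hρ1.ne']
    exact norm_viscosity_step_sub_le hconv hΦ hTne hΦc hp hfp (hα n).1.le (hα n).2.le (hxC n)
  refine ⟨hbound, max ‖x 0 - p‖ (‖Φ p - p‖ / (1 - ρ)) + ‖p‖, fun n => ?_⟩
  calc ‖x n‖ ≤ ‖x n - p‖ + ‖p‖ := norm_le_norm_sub_add _ _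
    _ ≤ _ := add_le_add_left (hbound n) _

theorem stmt_3
    {X : Type*} [NormedAddCommGroup X] [NormedSpace ℝ X]
    (C : Set X) (hC : C.Nonempty) (hconv : Convex ℝ C)
    (T Φ : X → X) (hT : ∀ x ∈ C, T x ∈ C) (hΦ : ∀ x ∈ C, Φ x ∈ C)
    (hTne : ∀ x ∈ C, ∀ y ∈ C, ‖T x - T y‖ ≤ ‖x - y‖)
    (ρ : ℝ) (hρ : ρ ∈ Set.Ioo (0 : ℝ) 1)
    (hΦc : ∀ x ∈ C, ∀ y ∈ C, ‖Φ x - Φ y‖ ≤ ρ * ‖x - y‖)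
    (α : ℕ → ℝ) (hα : ∀ n, α n ∈ Set.Ioo (0 : ℝ) 1)
    (x : ℕ → X) (hx0 : x 0 ∈ C) (hxC : ∀ n, x n ∈ C)
    (hrec : ∀ n, x (n + 1) = T (α n • Φ (x n) + (1 - α n) • x n))
    (p : X) (hp : p ∈ C) (hfp : T p = p) :
    (∀ n, ‖x n - p‖ ≤ max ‖x 0 - p‖ (‖Φ p - p‖ / (1 - ρ))) ∧
      ∃ M : ℝ, ∀ n, ‖x n‖ ≤ M :=
  stmt_3_general C hconv T Φ hΦ hTne ρ hρ hΦc α hα x hxC hrec p hp hfp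
end

section
/- Let {λ_n}_{n≥1} be a sequence in (0,1) and {a_n}_{n≥1}, {b_n}_{n≥1} be sequences of nonnegative real numbers such that a_{n+1} ≤ (1 − λ_{n+1})a_n + b_n for all n ≥ 1. Assume ∑_{n≥1} λ_n diverges with rate of divergence δ : ℤ₊ → ℕ, ∑_{n≥1} b_n converges with Cauchy modulus γ : (0,∞) → ℕ, and D > 0 is an upper bound on {a_n}. Then lim_{n→∞} a_n = 0 and, moreover, for every ε ∈ (0,2) one has a_n < ε for all n ≥ h(γ, δ, D, ε), where h(γ, δ, D, ε) = δ(γ(ε/2) + 1 + ⌈ln(2D/ε)⌉). -/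
open Filter Finset

/-!
Unrolling the recurrence from `N = γ(ε/2) + 1` gives
`a n ≤ (∏_{N < i ≤ n} (1 - λ i)) * D + ∑_{N ≤ i < n} b i`.
The sum is `< ε/2` by the Cauchy modulus. Since `1 - x ≤ exp (-x)`, the product is at most
`exp (-∑_{N < i ≤ n} λ i)`; for `n ≥ δ (N + ⌈ln (2D/ε)⌉)` the partial sum of `λ` up to `n` is
at least `N + ⌈ln (2D/ε)⌉`, and as every `λ i ≤ 1` its first `N` terms contribute at most `N`,
so the product is at most `ε / (2D)`.
-/

theorem sum_Icc_one_add_sum_Ioc {M : Type*} [AddCommMonoid M] (f : ℕ → M) {m n : ℕ}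
    (h : m ≤ n) : ∑ i ∈ Icc 1 m, f i + ∑ i ∈ Ioc m n, f i = ∑ i ∈ Icc 1 n, f i := by
  rw [show Icc 1 m = Ioc 0 m from Icc_add_one_left_eq_Ioc 0 m,
    show Icc 1 n = Ioc 0 n from Icc_add_one_left_eq_Ioc 0 n]
  exact sum_Ioc_consecutive f m.zero_le h

theorem sum_Icc_one_le_of_le_one {lam : ℕ → ℝ} (hlam : ∀ n ≥ 1, lam n ≤ 1) (n : ℕ) :
    ∑ i ∈ Icc 1 n, lam i ≤ n := by
  simpa using sum_le_card_nsmul (Icc 1 n) lam 1 fun i hi => hlam i (mem_Icc.1 hi).1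

theorem le_sum_Ioc_of_add_le_sum_Icc {lam : ℕ → ℝ} (hlam : ∀ n ≥ 1, lam n ≤ 1) {N n : ℕ}
    {c : ℝ} (hc : 0 ≤ c) (h : N + c ≤ ∑ i ∈ Icc 1 n, lam i) :
    N ≤ n ∧ c ≤ ∑ i ∈ Ioc N n, lam i := by
  have hNn : N ≤ n := by
    exact_mod_cast (show (N : ℝ) ≤ n by linarith [sum_Icc_one_le_of_le_one hlam n])
  refine ⟨hNn, ?_⟩
  linarith [sum_Icc_one_add_sum_Ioc lam hNn, sum_Icc_one_le_of_le_one hlam N]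

theorem prod_one_sub_le_exp_neg_sum {ι : Type*} (s : Finset ι) {x : ι → ℝ}
    (hx : ∀ i ∈ s, x i ≤ 1) : ∏ i ∈ s, (1 - x i) ≤ Real.exp (-∑ i ∈ s, x i) := by
  rw [← sum_neg_distrib, Real.exp_sum]
  exact prod_le_prod (fun i hi => by linarith [hx i hi]) fun i _ => Real.one_sub_le_exp_neg _

theorem le_prod_one_sub_mul_add_sum {lam a b : ℕ → ℝ} {N : ℕ}
    (hlam : ∀ n > N, lam n ∈ Set.Icc (0 : ℝ) 1) (hb : ∀ n ≥ N, 0 ≤ b n)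
    (hrec : ∀ n ≥ N, a (n + 1) ≤ (1 - lam (n + 1)) * a n + b n) {m : ℕ} (hm : N ≤ m) :
    a m ≤ (∏ i ∈ Ioc N m, (1 - lam i)) * a N + ∑ i ∈ Ico N m, b i := by
  induction m, hm using Nat.le_induction with
  | base => simp
  | succ m hm ih =>
    obtain ⟨hlam0, hlam1⟩ := hlam (m + 1) (by omega)
    have hsum : 0 ≤ ∑ i ∈ Ico N m, b i := sum_nonneg fun i hi => hb i (mem_Ico.1 hi).1
    rw [prod_Ioc_succ_top hm, sum_Ico_succ_top hm]
    calc a (m + 1) ≤ (1 - lam (m + 1)) * a m + b m := hrec m hm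
      _ ≤ (1 - lam (m + 1)) * ((∏ i ∈ Ioc N m, (1 - lam i)) * a N + ∑ i ∈ Ico N m, b i)
          + b m := by gcongr
      _ ≤ _ := by linarith [mul_nonneg hlam0 hsum]

theorem lt_of_add_ceil_log_le_sum {lam a b : ℕ → ℝ}
    (hlam : ∀ n ≥ 1, lam n ∈ Set.Icc (0 : ℝ) 1) (ha : ∀ n ≥ 1, 0 ≤ a n)
    (hb : ∀ n ≥ 1, 0 ≤ b n) (hrec : ∀ n ≥ 1, a (n + 1) ≤ (1 - lam (n + 1)) * a n + b n)
    {D : ℝ} (hD : 0 < D) (hDa : ∀ n ≥ 1, a n ≤ D) {e : ℝ} (he : 0 < e) {G n : ℕ}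
    (htail : ∀ m ≥ G, ∑ i ∈ Ioc G m, b i < e / 2)
    (hn : ((G + 1 + ⌈Real.log (2 * D / e)⌉₊ : ℕ) : ℝ) ≤ ∑ i ∈ Icc 1 n, lam i) : a n < e := by
  set N := G + 1
  set c := ⌈Real.log (2 * D / e)⌉₊
  obtain ⟨hNn, hc⟩ := le_sum_Ioc_of_add_le_sum_Icc (fun i hi => (hlam i hi).2) c.cast_nonneg
    (by exact_mod_cast hn)
  have hprod : ∏ i ∈ Ioc N n, (1 - lam i) ≤ e / (2 * D) := calc
    _ ≤ Real.exp (-∑ i ∈ Ioc N n, lam i) :=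
      prod_one_sub_le_exp_neg_sum _ fun i hi => (hlam i (by simp at hi; omega)).2
    _ ≤ Real.exp (-Real.log (2 * D / e)) :=
      Real.exp_le_exp.2 (by linarith [Nat.le_ceil (Real.log (2 * D / e))])
    _ = e / (2 * D) := by rw [Real.exp_neg, Real.exp_log (by positivity), inv_div]
  have hsum : ∑ i ∈ Ico N n, b i < e / 2 := by
    refine lt_of_le_of_lt ?_ (htail n (by omega))
    refine sum_le_sum_of_subset_of_nonneg (fun i hi => ?_) fun i hi _ => hb i ?_ <;>
      simp only [mem_Ico, mem_Ioc] at hi ⊢ <;> omega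
  calc a n ≤ (∏ i ∈ Ioc N n, (1 - lam i)) * a N + ∑ i ∈ Ico N n, b i :=
        le_prod_one_sub_mul_add_sum (fun i hi => hlam i (by omega)) (fun i hi => hb i (by omega))
          (fun i hi => hrec i (by omega)) hNn
    _ < e / (2 * D) * D + e / 2 :=
        add_lt_add_of_le_of_lt
          (mul_le_mul hprod (hDa N (by omega)) (ha N (by omega)) (by positivity)) hsum
    _ = e := by field_simp; ring

theorem stmt_5_general
    (lam a b : ℕ → ℝ)
    (hlam : ∀ n ≥ 1, lam n ∈ Set.Ioo (0 : ℝ) 1)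
    (ha : ∀ n ≥ 1, 0 ≤ a n) (hb : ∀ n ≥ 1, 0 ≤ b n)
    (hrec : ∀ n ≥ 1, a (n + 1) ≤ (1 - lam (n + 1)) * a n + b n)
    (δ : ℕ → ℕ)
    (hδ : ∀ n : ℕ, (n : ℝ) ≤ ∑ i ∈ Finset.Icc 1 (δ n), lam i)
    (γ : ℝ → ℕ)
    (hγ : ∀ e : ℝ, 0 < e → ∀ n : ℕ,
      |(∑ i ∈ Finset.Icc 1 (γ e + n), b i) - ∑ i ∈ Finset.Icc 1 (γ e), b i| < e)
    (D : ℝ) (hD : 0 < D) (hDa : ∀ n ≥ 1, a n ≤ D) :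
    Tendsto a atTop (nhds 0) ∧
      ∀ e ∈ Set.Ioo (0 : ℝ) 2,
        ∀ n ≥ δ (γ (e / 2) + 1 + ⌈Real.log (2 * D / e)⌉₊), a n < e := by
  have hlam' : ∀ n ≥ 1, lam n ∈ Set.Icc (0 : ℝ) 1 := fun n hn => Set.Ioo_subset_Icc_self (hlam n hn)
  have hbound : ∀ e ∈ Set.Ioo (0 : ℝ) 2,
      ∀ n ≥ δ (γ (e / 2) + 1 + ⌈Real.log (2 * D / e)⌉₊), a n < e := by
    rintro e ⟨he, -⟩ n hn
    refine lt_of_add_ceil_log_le_sum hlam' ha hb hrec hD hDa he (fun m hm => ?_)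
      ((hδ _).trans (sum_le_sum_of_subset_of_nonneg (Icc_subset_Icc_right hn)
        fun i hi _ => (hlam' i (mem_Icc.1 hi).1).1))
    have := hγ (e / 2) (by positivity) (m - γ (e / 2))
    rw [Nat.add_sub_cancel' hm, ← sum_Icc_one_add_sum_Ioc b hm, add_sub_cancel_left] at this
    exact (le_abs_self _).trans_lt this
  refine ⟨tendsto_order.2 ⟨fun e he => ?_, fun e he => ?_⟩, hbound⟩
  · filter_upwards [eventually_ge_atTop 1] with n hn using he.trans_le (ha n hn)
  · filter_upwards [eventually_ge_atTop (δ _)] with n hn using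
      (hbound (min e 1) ⟨lt_min he one_pos, by linarith [min_le_right e 1]⟩ n hn).trans_le
        (min_le_left e 1)

theorem stmt_5
    (lam a b : ℕ → ℝ)
    (hlam : ∀ n ≥ 1, lam n ∈ Set.Ioo (0 : ℝ) 1)
    (ha : ∀ n ≥ 1, 0 ≤ a n) (hb : ∀ n ≥ 1, 0 ≤ b n)
    (hrec : ∀ n ≥ 1, a (n + 1) ≤ (1 - lam (n + 1)) * a n + b n)
    (δ : ℕ → ℕ) (hδ1 : ∀ n, 1 ≤ δ n)
    (hδ : ∀ n : ℕ, (n : ℝ) ≤ ∑ i ∈ Finset.Icc 1 (δ n), lam i)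
    (γ : ℝ → ℕ) (hγ1 : ∀ e : ℝ, 0 < e → 1 ≤ γ e)
    (hγ : ∀ e : ℝ, 0 < e → ∀ n : ℕ,
      |(∑ i ∈ Finset.Icc 1 (γ e + n), b i) - ∑ i ∈ Finset.Icc 1 (γ e), b i| < e)
    (D : ℝ) (hD : 0 < D) (hDa : ∀ n ≥ 1, a n ≤ D) :
    Tendsto a atTop (nhds 0) ∧
      ∀ e ∈ Set.Ioo (0 : ℝ) 2,
        ∀ n ≥ δ (γ (e / 2) + 1 + ⌈Real.log (2 * D / e)⌉₊), a n < e :=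
  stmt_5_general lam a b hlam ha hb hrec δ hδ γ hγ D hD hDa
end

section
/- Suppose that for t ∈ (0,1) the point x_t ∈ C satisfies the implicit equation x_t = T(tΦ(x_t) + (1 − t)x_t), and let p ∈ C be a fixed point of T. Then ‖x_t − p‖ ≤ ‖Φ(p) − p‖/(1 − ρ); in particular the approximating curve {x_t : t ∈ (0,1)} is bounded. -/
/-! Since `T` fixes `p`, nonexpansiveness gives
`‖x_t - p‖ ≤ t ‖Φ x_t - p‖ + (1 - t) ‖x_t - p‖`, and the contraction property bounds
`‖Φ x_t - p‖ ≤ ρ ‖x_t - p‖ + ‖Φ p - p‖`. Cancelling `(1 - t) ‖x_t - p‖` and dividing by `t > 0`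
leaves `(1 - ρ) ‖x_t - p‖ ≤ ‖Φ p - p‖`. -/

theorem le_div_one_sub_of_le_mul_add_one_sub_mul {a b t ρ : ℝ} (ht : 0 < t) (hρ : ρ < 1)
    (h : a ≤ t * (ρ * a + b) + (1 - t) * a) : a ≤ b / (1 - ρ) := by
  rw [le_div_iff₀ (sub_pos.mpr hρ)]
  nlinarith

theorem norm_apply_sub_le_mul_norm_sub_add {X : Type*} [SeminormedAddCommGroup X] {C : Set X}
    {Φ : X → X} {ρ : ℝ} (hΦ : ∀ x ∈ C, ∀ y ∈ C, ‖Φ x - Φ y‖ ≤ ρ * ‖x - y‖)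
    {x p : X} (hx : x ∈ C) (hp : p ∈ C) :
    ‖Φ x - p‖ ≤ ρ * ‖x - p‖ + ‖Φ p - p‖ :=
  calc ‖Φ x - p‖ ≤ ‖Φ x - Φ p‖ + ‖Φ p - p‖ := norm_sub_le_norm_sub_add_norm_sub _ _ _
    _ ≤ ρ * ‖x - p‖ + ‖Φ p - p‖ := by gcongr; exact hΦ x hx p hp

theorem norm_smul_add_one_sub_smul_sub_le {X : Type*} [NormedAddCommGroup X] [NormedSpace ℝ X]
    {t : ℝ} (ht₀ : 0 ≤ t) (ht₁ : t ≤ 1) (u v p : X) :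
    ‖t • u + (1 - t) • v - p‖ ≤ t * ‖u - p‖ + (1 - t) * ‖v - p‖ := by
  simpa only [dist_eq_norm, smul_eq_mul] using
    (convexOn_univ_dist p).2 (Set.mem_univ u) (Set.mem_univ v) ht₀ (sub_nonneg.mpr ht₁)
      (add_sub_cancel t 1)

theorem stmt_7_general
    {X : Type*} [NormedAddCommGroup X] [NormedSpace ℝ X]
    (C : Set X) (hconv : Convex ℝ C)
    (T Φ : X → X) (hΦ : ∀ x ∈ C, Φ x ∈ C)
    (hTne : ∀ x ∈ C, ∀ y ∈ C, ‖T x - T y‖ ≤ ‖x - y‖)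
    (ρ : ℝ) (hρ : ρ ∈ Set.Ioo (0 : ℝ) 1)
    (hΦc : ∀ x ∈ C, ∀ y ∈ C, ‖Φ x - Φ y‖ ≤ ρ * ‖x - y‖)
    (p : X) (hp : p ∈ C) (hfp : T p = p)
    (t : ℝ) (ht : t ∈ Set.Ioo (0 : ℝ) 1)
    (xt : X) (hxt : xt ∈ C)
    (heq : xt = T (t • Φ xt + (1 - t) • xt)) :
    ‖xt - p‖ ≤ ‖Φ p - p‖ / (1 - ρ) := by
  obtain ⟨ht₀, ht₁⟩ := ht
  have hmem : t • Φ xt + (1 - t) • xt ∈ C :=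
    hconv (hΦ xt hxt) hxt ht₀.le (sub_nonneg.mpr ht₁.le) (add_sub_cancel t 1)
  refine le_div_one_sub_of_le_mul_add_one_sub_mul ht₀ hρ.2 ?_
  calc ‖xt - p‖ = ‖T (t • Φ xt + (1 - t) • xt) - T p‖ := by rw [← heq, hfp]
    _ ≤ ‖t • Φ xt + (1 - t) • xt - p‖ := hTne _ hmem p hp
    _ ≤ t * ‖Φ xt - p‖ + (1 - t) * ‖xt - p‖ :=
      norm_smul_add_one_sub_smul_sub_le ht₀.le ht₁.le _ _ _
    _ ≤ t * (ρ * ‖xt - p‖ + ‖Φ p - p‖) + (1 - t) * ‖xt - p‖ := by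
      gcongr; exact norm_apply_sub_le_mul_norm_sub_add hΦc hxt hp

theorem stmt_7
    {X : Type*} [NormedAddCommGroup X] [NormedSpace ℝ X]
    (C : Set X) (hC : C.Nonempty) (hconv : Convex ℝ C)
    (T Φ : X → X) (hT : ∀ x ∈ C, T x ∈ C) (hΦ : ∀ x ∈ C, Φ x ∈ C)
    (hTne : ∀ x ∈ C, ∀ y ∈ C, ‖T x - T y‖ ≤ ‖x - y‖)
    (ρ : ℝ) (hρ : ρ ∈ Set.Ioo (0 : ℝ) 1)
    (hΦc : ∀ x ∈ C, ∀ y ∈ C, ‖Φ x - Φ y‖ ≤ ρ * ‖x - y‖)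
    (p : X) (hp : p ∈ C) (hfp : T p = p)
    (t : ℝ) (ht : t ∈ Set.Ioo (0 : ℝ) 1)
    (xt : X) (hxt : xt ∈ C)
    (heq : xt = T (t • Φ xt + (1 - t) • xt)) :
    ‖xt - p‖ ≤ ‖Φ p - p‖ / (1 - ρ) :=
  stmt_7_general C hconv T Φ hΦ hTne ρ hρ hΦc p hp hfp t ht xt hxt heq
end

section
/- Let {x_n} be a bounded sequence contained in a separable subset D of a Banach space X. Then there is a subsequence {x_{n_k}} of {x_n} such that lim_{k→∞} ‖x_{n_k} − y‖ exists for every y ∈ D. -/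
/-!
Fix a countable set `s` whose closure contains `D`. The profiles `n ↦ (‖x n - z‖)_{z ∈ s}` lie in
a countable product of compact intervals, so some subsequence converges at every `z ∈ s`. Since
`y ↦ ‖x n - y‖` is `1`-Lipschitz uniformly in `n`, the subsequence is then Cauchy at every point
of the closure of `s`, and `ℝ` is complete.
-/

open Filter Set Topology Metric

section

variable {α : Type*} [PseudoMetricSpace α] {u : ℕ → α}

theorem exists_strictMono_forall_tendsto_dist_of_countable (hu : Bornology.IsBounded (range u))
    {s : Set α} (hs : s.Countable) :
    ∃ φ : ℕ → ℕ, StrictMono φ ∧ ∀ z ∈ s, ∃ l, Tendsto (fun k ↦ dist (u (φ k)) z) atTop (𝓝 l) := by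
  have : Countable s := hs.to_subtype
  choose r hr using fun z : s ↦ hu.subset_closedBall (z : α)
  have hmem : ∀ n, (fun z : s ↦ dist (u n) z) ∈ univ.pi fun z ↦ Icc 0 (r z) :=
    fun n z _ ↦ ⟨dist_nonneg, hr z (mem_range_self n)⟩
  obtain ⟨l, -, φ, hφ, hl⟩ := (isCompact_univ_pi fun z ↦ isCompact_Icc).tendsto_subseq hmem
  exact ⟨φ, hφ, fun z hz ↦ ⟨l ⟨z, hz⟩, tendsto_pi_nhds.1 hl ⟨z, hz⟩⟩⟩

theorem cauchySeq_dist_of_mem_closure {s : Set α}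
    (hs : ∀ z ∈ s, CauchySeq fun k ↦ dist (u k) z) {y : α} (hy : y ∈ closure s) :
    CauchySeq fun k ↦ dist (u k) y := by
  refine Metric.cauchySeq_iff.2 fun ε hε ↦ ?_
  obtain ⟨z, hz, hyz⟩ := Metric.mem_closure_iff.1 hy (ε / 3) (by positivity)
  obtain ⟨N, hN⟩ := Metric.cauchySeq_iff.1 (hs z hz) (ε / 3) (by positivity)
  refine ⟨N, fun m hm n hn ↦ ?_⟩
  calc dist (dist (u m) y) (dist (u n) y)
      ≤ dist (dist (u m) y) (dist (u m) z) + dist (dist (u m) z) (dist (u n) z)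
          + dist (dist (u n) z) (dist (u n) y) := dist_triangle4 _ _ _ _
    _ ≤ dist y z + dist (dist (u m) z) (dist (u n) z) + dist z y := by
        gcongr <;> apply dist_dist_dist_le_right
    _ < ε / 3 + ε / 3 + ε / 3 := by
        gcongr
        · exact hN m hm n hn
        · rwa [dist_comm]
    _ = ε := by ring

theorem exists_strictMono_forall_tendsto_dist_of_isSeparable (hu : Bornology.IsBounded (range u))
    {S : Set α} (hS : TopologicalSpace.IsSeparable S) :
    ∃ φ : ℕ → ℕ, StrictMono φ ∧ ∀ y ∈ S, ∃ l, Tendsto (fun k ↦ dist (u (φ k)) y) atTop (𝓝 l) := by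
  obtain ⟨s, hs, hSs⟩ := hS
  obtain ⟨φ, hφ, hconv⟩ := exists_strictMono_forall_tendsto_dist_of_countable hu hs
  refine ⟨φ, hφ, fun y hy ↦ cauchySeq_tendsto_of_complete ?_⟩
  exact cauchySeq_dist_of_mem_closure (fun z hz ↦ (hconv z hz).choose_spec.cauchySeq) (hSs hy)

end

theorem stmt_8_general
    {X : Type*} [NormedAddCommGroup X]
    (D : Set X) (hD : TopologicalSpace.IsSeparable D)
    (x : ℕ → X)
    (hbdd : ∃ M : ℝ, ∀ n, ‖x n‖ ≤ M) :
    ∃ φ : ℕ → ℕ, StrictMono φ ∧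
      ∀ y ∈ D, ∃ l : ℝ, Tendsto (fun k => ‖x (φ k) - y‖) atTop (nhds l) := by
  have hx : Bornology.IsBounded (range x) :=
    isBounded_iff_forall_norm_le.2 (by simpa only [forall_mem_range] using hbdd)
  simpa only [dist_eq_norm] using exists_strictMono_forall_tendsto_dist_of_isSeparable hx hD

theorem stmt_8
    {X : Type*} [NormedAddCommGroup X] [NormedSpace ℝ X] [CompleteSpace X]
    (D : Set X) (hD : TopologicalSpace.IsSeparable D)
    (x : ℕ → X) (hxD : ∀ n, x n ∈ D)
    (hbdd : ∃ M : ℝ, ∀ n, ‖x n‖ ≤ M) :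
    ∃ φ : ℕ → ℕ, StrictMono φ ∧
      ∀ y ∈ D, ∃ l : ℝ, Tendsto (fun k => ‖x (φ k) - y‖) atTop (nhds l) :=
  stmt_8_general D hD x hbdd
end

section
/- Let H be a Hilbert space, C ⊆ H a nonempty closed convex subset, T : C → C a nonexpansive mapping with nonempty fixed point set F = {x ∈ C : Tx = x}, and Φ : C → C a ρ-contraction. For each t ∈ (0,1) let x_t ∈ C be the unique point satisfying x_t = T(tΦ(x_t) + (1 − t)x_t). Then, as t → 0⁺, x_t converges strongly (in norm) to the unique point q ∈ F satisfying the variational inequality ⟨Φ(q) − q, x − q⟩ ≤ 0 for all x ∈ F. -/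
/-!
The approximants are bounded (by `‖Φ p - p‖ / (1 - ρ)` around any fixed point `p`), so along every
ultrafilter converging to `0⁺` they have a weak limit `w`: the Riesz representative of the
ultralimit of `⟪x t, ·⟫`. Since `‖x t - T (x t)‖ ≤ t ‖Φ (x t) - x t‖ → 0`, Opial's argument
(demiclosedness of `I - T`) puts `w` in `Fix T`. Nonexpansiveness at a fixed point `p` gives
`2 ⟪x t - Φ (x t), x t - p⟫ ≤ t ‖Φ (x t) - x t‖²`; for `p = w`, together with the contraction
property, this yields `(1 - ρ) ‖x t - w‖² ≤ ⟪Φ w - w, x t - w⟫ + O(t) → 0`, so the convergence is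
strong, and in the limit the same inequality becomes the variational inequality for `w`. A
contraction admits at most one solution of that inequality, so all ultrafilter limits coincide
and the whole family converges.
-/

open Filter Topology Set
open scoped RealInnerProductSpace

section

variable {H : Type*} [NormedAddCommGroup H] [InnerProductSpace ℝ H] {α : Type*}

theorem tendsto_inner_sub_of_forall_tendsto_inner {l : Filter α} {u : α → H} {w : H}
    (hw : ∀ y, Tendsto (fun a => ⟪u a, y⟫) l (𝓝 ⟪w, y⟫)) (v y : H) :
    Tendsto (fun a => ⟪u a - v, y⟫) l (𝓝 ⟪w - v, y⟫) := by
  simpa only [inner_sub_left] using (hw y).sub_const ⟪v, y⟫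

theorem Ultrafilter.exists_forall_tendsto_inner [CompleteSpace H] (𝒰 : Ultrafilter α)
    {u : α → H} {R : ℝ} (hu : ∀ᶠ a in 𝒰, ‖u a‖ ≤ R) :
    ∃ w : H, ∀ y, Tendsto (fun a => ⟪u a, y⟫) 𝒰 (𝓝 ⟪w, y⟫) := by
  have hlim : ∀ y : H, ∃ c, |c| ≤ R * ‖y‖ ∧ Tendsto (fun a => ⟪u a, y⟫) 𝒰 (𝓝 c) := by
    intro y
    have hmem : ∀ᶠ a in 𝒰, ⟪u a, y⟫ ∈ Icc (-(R * ‖y‖)) (R * ‖y‖) := hu.mono fun a ha => by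
      rw [mem_Icc, ← abs_le]
      exact (abs_real_inner_le_norm _ _).trans (mul_le_mul_of_nonneg_right ha (norm_nonneg y))
    obtain ⟨c, hc, hle⟩ := isCompact_Icc.ultrafilter_le_nhds (𝒰.map fun a => ⟪u a, y⟫)
      (by rwa [le_principal_iff, Ultrafilter.coe_map, Filter.mem_map])
    exact ⟨c, abs_le.2 hc, hle⟩
  choose L hLR hL using hlim
  let L' : H →ₗ[ℝ] ℝ :=
    { toFun := L
      map_add' := fun y z => tendsto_nhds_unique (hL (y + z)) <| by
        simpa only [inner_add_right] using (hL y).add (hL z)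
      map_smul' := fun c y => tendsto_nhds_unique (hL (c • y)) <| by
        simpa only [real_inner_smul_right, RingHom.id_apply, smul_eq_mul] using
          (hL y).const_mul c }
  refine ⟨(InnerProductSpace.toDual ℝ H).symm (L'.mkContinuous R hLR), fun y => ?_⟩
  rw [InnerProductSpace.toDual_symm_apply]
  exact hL y

theorem Convex.mem_of_forall_tendsto_inner [CompleteSpace H] {C : Set H} (hconv : Convex ℝ C)
    (hclosed : IsClosed C) {l : Filter α} [l.NeBot] {u : α → H} (huC : ∀ᶠ a in l, u a ∈ C)
    {w : H} (hw : ∀ y, Tendsto (fun a => ⟪u a, y⟫) l (𝓝 ⟪w, y⟫)) : w ∈ C := by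
  obtain ⟨a, ha⟩ := huC.exists
  obtain ⟨v, hvC, hv⟩ :=
    exists_norm_eq_iInf_of_complete_convex ⟨u a, ha⟩ hclosed.isComplete hconv w
  have hproj := (norm_eq_iInf_iff_real_inner_le_zero hconv hvC).1 hv
  have hwv : ⟪w - v, w - v⟫ ≤ 0 :=
    le_of_tendsto (tendsto_inner_sub_of_forall_tendsto_inner hw v (w - v))
      (huC.mono fun a ha => real_inner_comm (w - v) _ ▸ hproj _ ha)
  rwa [sub_eq_zero.1 (real_inner_self_nonpos.1 hwv)]

theorem isFixedPt_of_forall_tendsto_inner {C : Set H} {T : H → H}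
    (hTne : ∀ x ∈ C, ∀ y ∈ C, ‖T x - T y‖ ≤ ‖x - y‖) {l : Filter α} [l.NeBot] {u : α → H}
    {R : ℝ} (hu : ∀ᶠ a in l, u a ∈ C ∧ ‖u a‖ ≤ R) {w : H} (hwC : w ∈ C)
    (hw : ∀ y, Tendsto (fun a => ⟪u a, y⟫) l (𝓝 ⟪w, y⟫))
    (hT : Tendsto (fun a => ‖u a - T (u a)‖) l (𝓝 0)) : Function.IsFixedPt T w := by
  set e := fun a => ‖u a - T (u a)‖
  -- Opial: `‖u - T w‖² - ‖u - w‖²` tends to `‖w - T w‖²` and is at most `e (e + 2 ‖u - w‖)`.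
  have hle : ∀ᶠ a in l,
      ‖w - T w‖ ^ 2 + 2 * ⟪u a - w, w - T w⟫ ≤ e a * (e a + 2 * (R + ‖w‖)) := by
    filter_upwards [hu] with a ⟨haC, haR⟩
    have h1 : ‖u a - T w‖ ≤ e a + ‖u a - w‖ :=
      (norm_sub_le_norm_sub_add_norm_sub _ (T (u a)) _).trans
        (add_le_add_right (hTne _ haC _ hwC) _)
    have h2 : ‖u a - w‖ ≤ R + ‖w‖ := (norm_sub_le _ _).trans (by linarith)
    have h3 : ‖u a - T w‖ ^ 2 = ‖u a - w‖ ^ 2 + 2 * ⟪u a - w, w - T w⟫ + ‖w - T w‖ ^ 2 := by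
      rw [← norm_add_sq_real, sub_add_sub_cancel]
    nlinarith [mul_self_le_mul_self (norm_nonneg _) h1,
      mul_le_mul_of_nonneg_left h2 (norm_nonneg (u a - T (u a)))]
  have hlhs : Tendsto (fun a => ‖w - T w‖ ^ 2 + 2 * ⟪u a - w, w - T w⟫) l
      (𝓝 (‖w - T w‖ ^ 2 + 2 * ⟪w - w, w - T w⟫)) :=
    ((tendsto_inner_sub_of_forall_tendsto_inner hw w _).const_mul 2).const_add _
  have hrhs : Tendsto (fun a => e a * (e a + 2 * (R + ‖w‖))) l (𝓝 (0 * (0 + 2 * (R + ‖w‖)))) :=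
    hT.mul (hT.add_const _)
  have hsq := le_of_tendsto_of_tendsto hlhs hrhs hle
  rw [sub_self, inner_zero_left, mul_zero, add_zero, zero_mul] at hsq
  exact (sub_eq_zero.1 (norm_eq_zero.1 (pow_eq_zero_iff two_ne_zero |>.1
    (le_antisymm hsq (sq_nonneg _))))).symm

theorem eq_of_inner_sub_le_zero {Φ : H → H} {ρ : ℝ} (hρ : ρ < 1) {q q' : H}
    (hΦ : ‖Φ q - Φ q'‖ ≤ ρ * ‖q - q'‖) (h : ⟪Φ q - q, q' - q⟫ ≤ 0)
    (h' : ⟪Φ q' - q', q - q'⟫ ≤ 0) : q = q' := by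
  have hsum : ⟪Φ q - q, q' - q⟫ + ⟪Φ q' - q', q - q'⟫
      = ‖q - q'‖ ^ 2 - ⟪Φ q - Φ q', q - q'⟫ := by
    rw [← real_inner_self_eq_norm_sq]
    simp only [inner_sub_left, inner_sub_right, real_inner_comm]
    ring
  have hcs : ⟪Φ q - Φ q', q - q'⟫ ≤ ρ * ‖q - q'‖ ^ 2 :=
    (real_inner_le_norm _ _).trans (by nlinarith [norm_nonneg (q - q')])
  have hnorm : ‖q - q'‖ ^ 2 ≤ 0 := by nlinarith [sq_nonneg ‖q - q'‖]
  exact sub_eq_zero.1 (norm_eq_zero.1 (pow_eq_zero_iff two_ne_zero |>.1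
    (le_antisymm hnorm (sq_nonneg _))))

section Viscosity

variable {C : Set H} {T Φ : H → H} {ρ t : ℝ} {x p : H}

theorem viscosity_step_mem (hconv : Convex ℝ C) (hΦ : ∀ x ∈ C, Φ x ∈ C) (ht : t ∈ Ioo 0 1)
    (hxC : x ∈ C) : t • Φ x + (1 - t) • x ∈ C :=
  hconv (hΦ x hxC) hxC ht.1.le (sub_nonneg.2 ht.2.le) (add_sub_cancel _ _)

theorem norm_sub_le_of_viscosity (hconv : Convex ℝ C) (hΦ : ∀ x ∈ C, Φ x ∈ C)
    (hTne : ∀ x ∈ C, ∀ y ∈ C, ‖T x - T y‖ ≤ ‖x - y‖) (ht : t ∈ Ioo 0 1) (hxC : x ∈ C)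
    (hx : x = T (t • Φ x + (1 - t) • x)) (hpC : p ∈ C) (hp : T p = p) :
    ‖x - p‖ ≤ ‖x - p + t • (Φ x - x)‖ :=
  calc ‖x - p‖ = ‖T (t • Φ x + (1 - t) • x) - T p‖ := by rw [hp, ← hx]
    _ ≤ ‖t • Φ x + (1 - t) • x - p‖ := hTne _ (viscosity_step_mem hconv hΦ ht hxC) _ hpC
    _ = ‖x - p + t • (Φ x - x)‖ := by congr 1; module

theorem norm_sub_apply_le_of_viscosity (hconv : Convex ℝ C) (hΦ : ∀ x ∈ C, Φ x ∈ C)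
    (hTne : ∀ x ∈ C, ∀ y ∈ C, ‖T x - T y‖ ≤ ‖x - y‖) (ht : t ∈ Ioo 0 1) (hxC : x ∈ C)
    (hx : x = T (t • Φ x + (1 - t) • x)) : ‖x - T x‖ ≤ t * ‖Φ x - x‖ :=
  calc ‖x - T x‖ = ‖T (t • Φ x + (1 - t) • x) - T x‖ := by nth_rewrite 1 [hx]; rfl
    _ ≤ ‖t • Φ x + (1 - t) • x - x‖ := hTne _ (viscosity_step_mem hconv hΦ ht hxC) _ hxC
    _ = t * ‖Φ x - x‖ := by
      rw [show t • Φ x + (1 - t) • x - x = t • (Φ x - x) by module, norm_smul,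
        Real.norm_of_nonneg ht.1.le]

theorem mul_norm_sub_le_of_viscosity (hconv : Convex ℝ C) (hΦ : ∀ x ∈ C, Φ x ∈ C)
    (hTne : ∀ x ∈ C, ∀ y ∈ C, ‖T x - T y‖ ≤ ‖x - y‖)
    (hΦc : ∀ x ∈ C, ∀ y ∈ C, ‖Φ x - Φ y‖ ≤ ρ * ‖x - y‖) (ht : t ∈ Ioo 0 1) (hxC : x ∈ C)
    (hx : x = T (t • Φ x + (1 - t) • x)) (hpC : p ∈ C) (hp : T p = p) :
    (1 - ρ) * ‖x - p‖ ≤ ‖Φ p - p‖ := by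
  have hstep := norm_sub_le_of_viscosity hconv hΦ hTne ht hxC hx hpC hp
  have hconvex : ‖x - p + t • (Φ x - x)‖ ≤ t * ‖Φ x - p‖ + (1 - t) * ‖x - p‖ := by
    rw [show x - p + t • (Φ x - x) = t • (Φ x - p) + (1 - t) • (x - p) by module]
    refine (norm_add_le _ _).trans_eq ?_
    rw [norm_smul, norm_smul, Real.norm_of_nonneg ht.1.le,
      Real.norm_of_nonneg (sub_nonneg.2 ht.2.le)]
  have hΦx : ‖Φ x - p‖ ≤ ρ * ‖x - p‖ + ‖Φ p - p‖ :=
    (norm_sub_le_norm_sub_add_norm_sub _ (Φ p) _).trans (by gcongr; exact hΦc _ hxC _ hpC)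
  have : t * ((1 - ρ) * ‖x - p‖) ≤ t * ‖Φ p - p‖ := by nlinarith [ht.1]
  exact le_of_mul_le_mul_left this ht.1

theorem inner_sub_le_of_viscosity (hconv : Convex ℝ C) (hΦ : ∀ x ∈ C, Φ x ∈ C)
    (hTne : ∀ x ∈ C, ∀ y ∈ C, ‖T x - T y‖ ≤ ‖x - y‖) (ht : t ∈ Ioo 0 1) (hxC : x ∈ C)
    (hx : x = T (t • Φ x + (1 - t) • x)) (hpC : p ∈ C) (hp : T p = p) :
    2 * ⟪x - Φ x, x - p⟫ ≤ t * ‖Φ x - x‖ ^ 2 := by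
  have hstep := norm_sub_le_of_viscosity hconv hΦ hTne ht hxC hx hpC hp
  have hexp : ‖x - p + t • (Φ x - x)‖ ^ 2
      = ‖x - p‖ ^ 2 - t * (2 * ⟪x - Φ x, x - p⟫ - t * ‖Φ x - x‖ ^ 2) := by
    rw [norm_add_sq_real, real_inner_smul_right, norm_smul, Real.norm_of_nonneg ht.1.le,
      ← neg_sub x (Φ x), inner_neg_right, real_inner_comm, norm_neg]
    ring
  have : t * (2 * ⟪x - Φ x, x - p⟫ - t * ‖Φ x - x‖ ^ 2) ≤ 0 := by
    nlinarith [pow_le_pow_left₀ (norm_nonneg _) hstep 2]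
  nlinarith [ht.1]

theorem mul_norm_sub_sq_le_of_viscosity (hconv : Convex ℝ C) (hΦ : ∀ x ∈ C, Φ x ∈ C)
    (hTne : ∀ x ∈ C, ∀ y ∈ C, ‖T x - T y‖ ≤ ‖x - y‖)
    (hΦc : ∀ x ∈ C, ∀ y ∈ C, ‖Φ x - Φ y‖ ≤ ρ * ‖x - y‖) (ht : t ∈ Ioo 0 1) (hxC : x ∈ C)
    (hx : x = T (t • Φ x + (1 - t) • x)) (hpC : p ∈ C) (hp : T p = p) :
    2 * (1 - ρ) * ‖x - p‖ ^ 2 ≤ 2 * ⟪Φ p - p, x - p⟫ + t * ‖Φ x - x‖ ^ 2 := by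
  have hkey := inner_sub_le_of_viscosity hconv hΦ hTne ht hxC hx hpC hp
  have hsplit : ⟪x - Φ x, x - p⟫ = ‖x - p‖ ^ 2 - ⟪Φ x - Φ p, x - p⟫ - ⟪Φ p - p, x - p⟫ := by
    rw [← real_inner_self_eq_norm_sq, ← inner_sub_left, ← inner_sub_left]
    congr 1; abel
  have hcs : ⟪Φ x - Φ p, x - p⟫ ≤ ρ * ‖x - p‖ ^ 2 :=
    (real_inner_le_norm _ _).trans (by nlinarith [norm_nonneg (x - p), hΦc _ hxC _ hpC])
  linarith

end Viscosity

section ViscosityFamily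

variable {C : Set H} {T Φ : H → H} {ρ : ℝ} {x : ℝ → H}

theorem exists_bound_of_viscosity (hconv : Convex ℝ C) (hΦ : ∀ x ∈ C, Φ x ∈ C)
    (hTne : ∀ x ∈ C, ∀ y ∈ C, ‖T x - T y‖ ≤ ‖x - y‖) (hρ : ρ < 1)
    (hΦc : ∀ x ∈ C, ∀ y ∈ C, ‖Φ x - Φ y‖ ≤ ρ * ‖x - y‖)
    (hx : ∀ t ∈ Ioo (0 : ℝ) 1, x t ∈ C ∧ x t = T (t • Φ (x t) + (1 - t) • x t))
    {p : H} (hpC : p ∈ C) (hp : T p = p) :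
    ∃ R, ∀ t ∈ Ioo (0 : ℝ) 1, ‖x t‖ ≤ R ∧ ‖Φ (x t) - x t‖ ≤ R := by
  set r := ‖Φ p - p‖ / (1 - ρ)
  refine ⟨‖p‖ + 2 * r + ‖Φ p - p‖, fun t ht => ?_⟩
  have hd : ‖x t - p‖ ≤ r := (le_div_iff₀ (sub_pos.2 hρ)).2 <| by
    linarith [mul_norm_sub_le_of_viscosity hconv hΦ hTne hΦc ht (hx t ht).1 (hx t ht).2 hpC hp]
  have hr : 0 ≤ r := (norm_nonneg _).trans hd
  have hΦx : ‖Φ (x t) - Φ p‖ ≤ ‖x t - p‖ :=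
    (hΦc _ (hx t ht).1 _ hpC).trans (mul_le_of_le_one_left (norm_nonneg _) hρ.le)
  have h1 := norm_sub_le_norm_sub_add_norm_sub (Φ (x t)) (Φ p) (x t)
  have h2 := norm_sub_le_norm_sub_add_norm_sub (Φ p) p (x t)
  have h3 := norm_le_norm_sub_add (x t) p
  rw [norm_sub_rev p] at h2
  constructor <;> linarith [norm_nonneg p, norm_nonneg (Φ p - p)]

theorem tendsto_of_forall_tendsto_inner_of_viscosity (hconv : Convex ℝ C)
    (hΦ : ∀ x ∈ C, Φ x ∈ C) (hTne : ∀ x ∈ C, ∀ y ∈ C, ‖T x - T y‖ ≤ ‖x - y‖) (hρ : ρ < 1)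
    (hΦc : ∀ x ∈ C, ∀ y ∈ C, ‖Φ x - Φ y‖ ≤ ρ * ‖x - y‖)
    (hx : ∀ t ∈ Ioo (0 : ℝ) 1, x t ∈ C ∧ x t = T (t • Φ (x t) + (1 - t) • x t)) {R : ℝ}
    (hR : ∀ t ∈ Ioo (0 : ℝ) 1, ‖Φ (x t) - x t‖ ≤ R) {l : Filter ℝ} (hl : l ≤ 𝓝[Ioo 0 1] 0)
    {w : H} (hwC : w ∈ C) (hw : T w = w) (hxw : ∀ y, Tendsto (fun t => ⟪x t, y⟫) l (𝓝 ⟪w, y⟫)) :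
    Tendsto x l (𝓝 w) := by
  have ht : ∀ᶠ t in l, t ∈ Ioo (0 : ℝ) 1 := hl self_mem_nhdsWithin
  have ht0 : Tendsto (fun t => t) l (𝓝 0) := hl.trans nhdsWithin_le_nhds
  set g := fun t => (2 * ⟪x t - w, Φ w - w⟫ + t * R ^ 2) / (2 * (1 - ρ))
  have hg : Tendsto g l (𝓝 0) := by
    simpa using (((tendsto_inner_sub_of_forall_tendsto_inner hxw w (Φ w - w)).const_mul 2).add
      (ht0.mul_const (R ^ 2))).div_const (2 * (1 - ρ))
  have hsq : ∀ᶠ t in l, ‖x t - w‖ ^ 2 ≤ g t := ht.mono fun t ht' => by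
    have h := mul_norm_sub_sq_le_of_viscosity hconv hΦ hTne hΦc ht' (hx t ht').1 (hx t ht').2 hwC hw
    have hR2 := pow_le_pow_left₀ (norm_nonneg _) (hR t ht') 2
    rw [real_inner_comm] at h
    rw [le_div_iff₀ (by linarith)]
    nlinarith [ht'.1]
  rw [tendsto_iff_norm_sub_tendsto_zero]
  refine squeeze_zero' (Eventually.of_forall fun t => norm_nonneg _)
    (hsq.mono fun t h => Real.le_sqrt_of_sq_le h) ?_
  simpa using hg.sqrt

theorem inner_le_zero_of_tendsto_of_viscosity (hconv : Convex ℝ C) (hΦ : ∀ x ∈ C, Φ x ∈ C)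
    (hTne : ∀ x ∈ C, ∀ y ∈ C, ‖T x - T y‖ ≤ ‖x - y‖)
    (hΦc : ∀ x ∈ C, ∀ y ∈ C, ‖Φ x - Φ y‖ ≤ ρ * ‖x - y‖)
    (hx : ∀ t ∈ Ioo (0 : ℝ) 1, x t ∈ C ∧ x t = T (t • Φ (x t) + (1 - t) • x t))
    {l : Filter ℝ} [l.NeBot] (hl : l ≤ 𝓝[Ioo 0 1] 0) {w : H} (hwC : w ∈ C)
    (hxw : Tendsto x l (𝓝 w)) {y : H} (hyC : y ∈ C) (hy : T y = y) :
    ⟪Φ w - w, y - w⟫ ≤ 0 := by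
  have ht : ∀ᶠ t in l, t ∈ Ioo (0 : ℝ) 1 := hl self_mem_nhdsWithin
  have ht0 : Tendsto (fun t => t) l (𝓝 0) := hl.trans nhdsWithin_le_nhds
  have hΦx : Tendsto (fun t => Φ (x t)) l (𝓝 (Φ w)) := by
    rw [tendsto_iff_norm_sub_tendsto_zero] at hxw ⊢
    exact squeeze_zero' (Eventually.of_forall fun t => norm_nonneg _)
      (ht.mono fun t ht' => hΦc _ (hx t ht').1 _ hwC) (by simpa using hxw.const_mul ρ)
  have hlhs : Tendsto (fun t => 2 * ⟪x t - Φ (x t), x t - y⟫) l (𝓝 (2 * ⟪w - Φ w, w - y⟫)) :=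
    ((hxw.sub hΦx).inner (hxw.sub_const y)).const_mul 2
  have hrhs : Tendsto (fun t => t * ‖Φ (x t) - x t‖ ^ 2) l (𝓝 (0 * ‖Φ w - w‖ ^ 2)) :=
    ht0.mul ((hΦx.sub hxw).norm.pow 2)
  have hlim := le_of_tendsto_of_tendsto hlhs hrhs <| ht.mono fun t ht' =>
    inner_sub_le_of_viscosity hconv hΦ hTne ht' (hx t ht').1 (hx t ht').2 hyC hy
  rw [← neg_sub w (Φ w), ← neg_sub w y, inner_neg_neg]
  linarith

theorem exists_tendsto_ultrafilter_of_viscosity [CompleteSpace H] (hclosed : IsClosed C)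
    (hconv : Convex ℝ C) (hΦ : ∀ x ∈ C, Φ x ∈ C) (hTne : ∀ x ∈ C, ∀ y ∈ C, ‖T x - T y‖ ≤ ‖x - y‖)
    (hρ : ρ < 1) (hΦc : ∀ x ∈ C, ∀ y ∈ C, ‖Φ x - Φ y‖ ≤ ρ * ‖x - y‖)
    (hx : ∀ t ∈ Ioo (0 : ℝ) 1, x t ∈ C ∧ x t = T (t • Φ (x t) + (1 - t) • x t)) {R : ℝ}
    (hR : ∀ t ∈ Ioo (0 : ℝ) 1, ‖x t‖ ≤ R ∧ ‖Φ (x t) - x t‖ ≤ R)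
    (𝒰 : Ultrafilter ℝ) (h𝒰 : (𝒰 : Filter ℝ) ≤ 𝓝[Ioo 0 1] 0) :
    ∃ q, (q ∈ C ∧ T q = q ∧ ∀ y ∈ C, T y = y → ⟪Φ q - q, y - q⟫ ≤ 0) ∧ Tendsto x 𝒰 (𝓝 q) := by
  have ht : ∀ᶠ t in (𝒰 : Filter ℝ), t ∈ Ioo (0 : ℝ) 1 := h𝒰 self_mem_nhdsWithin
  have ht0 : Tendsto (fun t => t) (𝒰 : Filter ℝ) (𝓝 0) := h𝒰.trans nhdsWithin_le_nhds
  obtain ⟨w, hxw⟩ := 𝒰.exists_forall_tendsto_inner (ht.mono fun t ht' => (hR t ht').1)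
  have hwC : w ∈ C :=
    hconv.mem_of_forall_tendsto_inner hclosed (ht.mono fun t ht' => (hx t ht').1) hxw
  have hres : Tendsto (fun t => ‖x t - T (x t)‖) 𝒰 (𝓝 0) :=
    squeeze_zero' (Eventually.of_forall fun t => norm_nonneg _)
      (ht.mono fun t ht' => (norm_sub_apply_le_of_viscosity hconv hΦ hTne ht' (hx t ht').1
        (hx t ht').2).trans (mul_le_mul_of_nonneg_left (hR t ht').2 ht'.1.le))
      (by simpa using ht0.mul_const R)
  have hw : T w = w := isFixedPt_of_forall_tendsto_inner hTne
    (ht.mono fun t ht' => ⟨(hx t ht').1, (hR t ht').1⟩) hwC hxw hres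
  have hlim := tendsto_of_forall_tendsto_inner_of_viscosity hconv hΦ hTne hρ hΦc hx
    (fun t ht' => (hR t ht').2) h𝒰 hwC hw hxw
  exact ⟨w, ⟨hwC, hw, fun y hyC hy =>
    inner_le_zero_of_tendsto_of_viscosity hconv hΦ hTne hΦc hx h𝒰 hwC hlim hyC hy⟩, hlim⟩

end ViscosityFamily

end

theorem stmt_9_general
    {H : Type*} [NormedAddCommGroup H] [InnerProductSpace ℝ H] [CompleteSpace H]
    (C : Set H) (hclosed : IsClosed C) (hconv : Convex ℝ C)
    (T Φ : H → H) (hΦ : ∀ x ∈ C, Φ x ∈ C)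
    (hTne : ∀ x ∈ C, ∀ y ∈ C, ‖T x - T y‖ ≤ ‖x - y‖)
    (hF : ∃ x ∈ C, T x = x)
    (ρ : ℝ) (hρ : ρ ∈ Set.Ioo (0 : ℝ) 1)
    (hΦc : ∀ x ∈ C, ∀ y ∈ C, ‖Φ x - Φ y‖ ≤ ρ * ‖x - y‖)
    (x : ℝ → H)
    (hx : ∀ t ∈ Set.Ioo (0 : ℝ) 1,
      x t ∈ C ∧ x t = T (t • Φ (x t) + (1 - t) • x t)) :
    ∃ q : H, (q ∈ C ∧ T q = q ∧ ∀ y ∈ C, T y = y → ⟪Φ q - q, y - q⟫ ≤ 0) ∧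
      (∀ q' : H, (q' ∈ C ∧ T q' = q' ∧ ∀ y ∈ C, T y = y → ⟪Φ q' - q', y - q'⟫ ≤ 0)
        → q' = q) ∧
      Tendsto x (nhdsWithin 0 (Set.Ioo (0 : ℝ) 1)) (nhds q) := by
  obtain ⟨p, hpC, hp⟩ := hF
  obtain ⟨R, hR⟩ := exists_bound_of_viscosity hconv hΦ hTne hρ.2 hΦc hx hpC hp
  have hlim := exists_tendsto_ultrafilter_of_viscosity hclosed hconv hΦ hTne hρ.2 hΦc hx hR
  have := left_nhdsWithin_Ioo_neBot (zero_lt_one' ℝ)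
  obtain ⟨q, hq, -⟩ := hlim (Ultrafilter.of _) (Ultrafilter.of_le _)
  have huniq : ∀ q', (q' ∈ C ∧ T q' = q' ∧ ∀ y ∈ C, T y = y → ⟪Φ q' - q', y - q'⟫ ≤ 0) →
      q' = q := fun q' hq' => eq_of_inner_sub_le_zero hρ.2 (hΦc _ hq'.1 _ hq.1)
    (hq'.2.2 _ hq.1 hq.2.1) (hq.2.2 _ hq'.1 hq'.2.1)
  refine ⟨q, hq, huniq, (tendsto_iff_ultrafilter _ _ _).2 fun 𝒰 h𝒰 => ?_⟩
  obtain ⟨q', hq', hq'lim⟩ := hlim 𝒰 h𝒰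
  rwa [huniq q' hq'] at hq'lim

theorem stmt_9
    {H : Type*} [NormedAddCommGroup H] [InnerProductSpace ℝ H] [CompleteSpace H]
    (C : Set H) (hC : C.Nonempty) (hclosed : IsClosed C) (hconv : Convex ℝ C)
    (T Φ : H → H) (hT : ∀ x ∈ C, T x ∈ C) (hΦ : ∀ x ∈ C, Φ x ∈ C)
    (hTne : ∀ x ∈ C, ∀ y ∈ C, ‖T x - T y‖ ≤ ‖x - y‖)
    (hF : ∃ x ∈ C, T x = x)
    (ρ : ℝ) (hρ : ρ ∈ Set.Ioo (0 : ℝ) 1)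
    (hΦc : ∀ x ∈ C, ∀ y ∈ C, ‖Φ x - Φ y‖ ≤ ρ * ‖x - y‖)
    (x : ℝ → H)
    (hx : ∀ t ∈ Set.Ioo (0 : ℝ) 1,
      x t ∈ C ∧ x t = T (t • Φ (x t) + (1 - t) • x t)) :
    ∃ q : H, (q ∈ C ∧ T q = q ∧ ∀ y ∈ C, T y = y → ⟪Φ q - q, y - q⟫ ≤ 0) ∧
      (∀ q' : H, (q' ∈ C ∧ T q' = q' ∧ ∀ y ∈ C, T y = y → ⟪Φ q' - q', y - q'⟫ ≤ 0)
        → q' = q) ∧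
      Tendsto x (nhdsWithin 0 (Set.Ioo (0 : ℝ) 1)) (nhds q) :=
  stmt_9_general C hclosed hconv T Φ hΦ hTne hF ρ hρ hΦc x hx
end

section
/- Let X be a normed space, C ⊆ X a nonempty bounded convex subset with diameter d_C > 0, T : C → C nonexpansive, Φ : C → C a ρ-contraction, and α_n = 1/(n+1) for all n ≥ 0. Then for every x_0 ∈ C the iteration x_{n+1} = T(α_n Φ(x_n) + (1 − α_n)x_n) satisfies lim ‖x_n − Tx_n‖ = 0 and, for all ε ∈ (0,2), ‖x_n − Tx_n‖ < ε for all n ≥ Θ(ρ, d_C, ε), where Θ(ρ, d_C, ε) = exp( (4/(1 − ρ)) · (16 d_C/ε + 2) ). -/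
/-!
Write `β = 1 - ρ`, `d = diam C` and `s n = ‖x (n + 1) - x n‖`. Since `T` is nonexpansive and `Φ` a
`ρ`-contraction, `s (n + 1) ≤ (1 - β α (n + 1)) s n + (α n - α (n + 1)) d`, and
`‖x n - T (x n)‖ ≤ s n + α n d`. Unrolling the recursion from `m` to `n` with `1 - t ≤ exp (-t)`
and `∑_{m ≤ k < n} 1 / (k + 2) ≥ log (n + 2) - log (m + 2)` gives
`‖x n - T (x n)‖ ≤ d ((m + 2) / (n + 2)) ^ β + d / (m + 1)`. Choosing `m = ⌈4 d / ε⌉` makes both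
terms small once `log n` exceeds the threshold `(4 / β) (16 d / ε + 2)`.
-/

open Filter Finset Real

theorem Real.log_add_one_sub_log_le_inv {t : ℝ} (ht : 0 < t) : log (t + 1) - log t ≤ t⁻¹ := by
  have h := log_le_sub_one_of_pos (div_pos (by linarith : 0 < t + 1) ht)
  rw [log_div (by linarith) ht.ne', add_div, div_self ht.ne', one_div] at h
  linarith

theorem Real.log_add_sub_log_add_le_sum_Ico_inv {a : ℝ} {m n : ℕ} (ha : 0 < m + a) (hmn : m ≤ n) :
    log (n + a) - log (m + a) ≤ ∑ k ∈ Ico m n, ((k : ℝ) + a)⁻¹ := by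
  induction n, hmn using Nat.le_induction with
  | base => simp
  | succ n hmn ih =>
    have hna : 0 < (n : ℝ) + a := by
      have : (m : ℝ) ≤ n := by exact_mod_cast hmn
      linarith
    have hstep := log_add_one_sub_log_le_inv hna
    rw [sum_Ico_succ_top hmn, Nat.cast_succ, add_right_comm]
    linarith

theorem le_exp_neg_sum_mul_add_sub {s c B : ℕ → ℝ} (hc0 : ∀ k, 0 ≤ c k) (hc1 : ∀ k, c k ≤ 1)
    (hB : Antitone B) (hrec : ∀ k, s (k + 1) ≤ (1 - c k) * s k + (B k - B (k + 1)))
    {m n : ℕ} (hsm : 0 ≤ s m) (hmn : m ≤ n) :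
    s n ≤ exp (-∑ k ∈ Ico m n, c k) * s m + (B m - B n) := by
  induction n, hmn using Nat.le_induction with
  | base => simp
  | succ n hmn ih =>
    set E := exp (-∑ k ∈ Ico m n, c k)
    have hE : 0 ≤ E * s m := mul_nonneg (exp_pos _).le hsm
    have hBmn : 0 ≤ B m - B n := sub_nonneg.2 (hB hmn)
    have hexp : 1 - c n ≤ exp (-c n) := by linarith [add_one_le_exp (-c n)]
    rw [sum_Ico_succ_top hmn, neg_add, exp_add]
    calc s (n + 1) ≤ (1 - c n) * s n + (B n - B (n + 1)) := hrec n
      _ ≤ (1 - c n) * (E * s m + (B m - B n)) + (B n - B (n + 1)) := by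
        gcongr; linarith [hc1 n]
      _ ≤ exp (-c n) * (E * s m) + (B m - B n) + (B n - B (n + 1)) := by
        nlinarith [hc0 n]
      _ = E * exp (-c n) * s m + (B m - B (n + 1)) := by ring

theorem le_exp_neg_mul_log_sub_log_mul_add {s : ℕ → ℝ} {β d : ℝ} (hβ0 : 0 ≤ β) (hβ1 : β ≤ 1)
    (hd : 0 ≤ d)
    (hrec : ∀ n : ℕ, s (n + 1) ≤ (1 - β / (n + 2)) * s n + (d / (n + 1) - d / (n + 2)))
    {m n : ℕ} (hsm : 0 ≤ s m) (hmn : m ≤ n) :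
    s n ≤ exp (-β * (log (n + 2) - log (m + 2))) * s m + (d / (m + 1) - d / (n + 1)) := by
  have hB : Antitone fun k : ℕ => d / ((k : ℝ) + 1) := fun i j hij => by
    dsimp only
    gcongr
  have hsum : β * (log (n + 2) - log (m + 2)) ≤ ∑ k ∈ Ico m n, β / ((k : ℝ) + 2) := by
    simp only [div_eq_mul_inv, ← mul_sum]
    exact mul_le_mul_of_nonneg_left (log_add_sub_log_add_le_sum_Ico_inv (by positivity) hmn) hβ0
  calc s n ≤ exp (-∑ k ∈ Ico m n, β / ((k : ℝ) + 2)) * s m + (d / (m + 1) - d / (n + 1)) :=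
        le_exp_neg_sum_mul_add_sub (fun k => by positivity)
          (fun k => div_le_one_of_le₀ (by linarith) (by positivity)) hB
          (fun k => by convert hrec k using 3; push_cast; ring) hsm hmn
    _ ≤ exp (-β * (log (n + 2) - log (m + 2))) * s m + (d / (m + 1) - d / (n + 1)) := by
        rw [neg_mul]
        gcongr

theorem norm_sub_le_diam {E : Type*} [SeminormedAddCommGroup E] {C : Set E}
    (hbdd : Bornology.IsBounded C) {x y : E} (hx : x ∈ C) (hy : y ∈ C) :
    ‖x - y‖ ≤ Metric.diam C := by
  rw [← dist_eq_norm]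
  exact Metric.dist_le_diam_of_mem hbdd hx hy

theorem norm_smul_add_one_sub_smul_sub_le_s15 {E : Type*} [SeminormedAddCommGroup E]
    [NormedSpace ℝ E] {a a' : ℝ} (ha' : 0 ≤ a') (haa' : a' ≤ a) (ha'1 : a' ≤ 1) (u u' v v' : E) :
    ‖(a' • u' + (1 - a') • v') - (a • u + (1 - a) • v)‖
      ≤ a' * ‖u' - u‖ + (1 - a') * ‖v' - v‖ + (a - a') * ‖v - u‖ := by
  have hid : (a' • u' + (1 - a') • v') - (a • u + (1 - a) • v)
      = a' • (u' - u) + (1 - a') • (v' - v) + (a - a') • (v - u) := by module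
  rw [hid]
  refine (norm_add₃_le ..).trans_eq ?_
  rw [norm_smul, norm_smul, norm_smul, Real.norm_of_nonneg ha',
    Real.norm_of_nonneg (sub_nonneg.2 ha'1), Real.norm_of_nonneg (sub_nonneg.2 haa')]

section Iteration

variable {X : Type*} [NormedAddCommGroup X] [NormedSpace ℝ X] {C : Set X} {T Φ : X → X}

theorem smul_apply_add_one_sub_smul_mem (hconv : Convex ℝ C) (hΦ : ∀ x ∈ C, Φ x ∈ C) {a : ℝ}
    (ha0 : 0 ≤ a) (ha1 : a ≤ 1) {x : X} (hx : x ∈ C) : a • Φ x + (1 - a) • x ∈ C :=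
  hconv (hΦ x hx) hx ha0 (sub_nonneg.2 ha1) (add_sub_cancel a 1)

theorem norm_apply_smul_add_sub_apply_smul_add_le (hconv : Convex ℝ C)
    (hbdd : Bornology.IsBounded C) (hΦ : ∀ x ∈ C, Φ x ∈ C)
    (hT : ∀ x ∈ C, ∀ y ∈ C, ‖T x - T y‖ ≤ ‖x - y‖) {ρ : ℝ}
    (hΦc : ∀ x ∈ C, ∀ y ∈ C, ‖Φ x - Φ y‖ ≤ ρ * ‖x - y‖) {a a' : ℝ} (ha' : 0 ≤ a') (haa' : a' ≤ a)
    (ha : a ≤ 1) {x x' : X} (hx : x ∈ C) (hx' : x' ∈ C) :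
    ‖T (a' • Φ x' + (1 - a') • x') - T (a • Φ x + (1 - a) • x)‖
      ≤ (1 - (1 - ρ) * a') * ‖x' - x‖ + (a - a') * Metric.diam C := by
  have hsub : 0 ≤ a - a' := sub_nonneg.2 haa'
  calc _ ≤ ‖(a' • Φ x' + (1 - a') • x') - (a • Φ x + (1 - a) • x)‖ :=
        hT _ (smul_apply_add_one_sub_smul_mem hconv hΦ ha' (haa'.trans ha) hx') _
          (smul_apply_add_one_sub_smul_mem hconv hΦ (ha'.trans haa') ha hx)
    _ ≤ a' * ‖Φ x' - Φ x‖ + (1 - a') * ‖x' - x‖ + (a - a') * ‖x - Φ x‖ :=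
        norm_smul_add_one_sub_smul_sub_le_s15 ha' haa' (haa'.trans ha) _ _ _ _
    _ ≤ a' * (ρ * ‖x' - x‖) + (1 - a') * ‖x' - x‖ + (a - a') * Metric.diam C := by
        gcongr
        · exact hΦc x' hx' x hx
        · exact norm_sub_le_diam hbdd hx (hΦ x hx)
    _ = (1 - (1 - ρ) * a') * ‖x' - x‖ + (a - a') * Metric.diam C := by ring

theorem norm_sub_apply_le (hconv : Convex ℝ C) (hbdd : Bornology.IsBounded C)
    (hΦ : ∀ x ∈ C, Φ x ∈ C) (hT : ∀ x ∈ C, ∀ y ∈ C, ‖T x - T y‖ ≤ ‖x - y‖) {a : ℝ} (ha0 : 0 ≤ a)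
    (ha1 : a ≤ 1) {x : X} (hx : x ∈ C) :
    ‖x - T x‖ ≤ ‖T (a • Φ x + (1 - a) • x) - x‖ + a * Metric.diam C := by
  set y := a • Φ x + (1 - a) • x
  have hyx : y - x = a • (Φ x - x) := by module
  calc ‖x - T x‖ ≤ ‖x - T y‖ + ‖T y - T x‖ := norm_sub_le_norm_sub_add_norm_sub _ _ _
    _ ≤ ‖T y - x‖ + ‖y - x‖ := by
        rw [norm_sub_rev x]
        gcongr
        exact hT y (smul_apply_add_one_sub_smul_mem hconv hΦ ha0 ha1 hx) x hx
    _ ≤ ‖T y - x‖ + a * Metric.diam C := by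
        rw [hyx, norm_smul, Real.norm_of_nonneg ha0]
        gcongr
        exact norm_sub_le_diam hbdd (hΦ x hx) hx

theorem norm_sub_apply_le_exp_mul_add (hconv : Convex ℝ C) (hbdd : Bornology.IsBounded C)
    (hΦ : ∀ x ∈ C, Φ x ∈ C) (hT : ∀ x ∈ C, ∀ y ∈ C, ‖T x - T y‖ ≤ ‖x - y‖) {ρ : ℝ} (hρ0 : 0 ≤ ρ)
    (hρ1 : ρ ≤ 1) (hΦc : ∀ x ∈ C, ∀ y ∈ C, ‖Φ x - Φ y‖ ≤ ρ * ‖x - y‖) {x : ℕ → X}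
    (hxC : ∀ n, x n ∈ C)
    (hrec : ∀ n : ℕ, x (n + 1) = T ((1 / ((n : ℝ) + 1)) • Φ (x n) + (1 - 1 / ((n : ℝ) + 1)) • x n))
    {m n : ℕ} (hmn : m ≤ n) :
    ‖x n - T (x n)‖ ≤
      Metric.diam C * exp (-(1 - ρ) * (log (n + 2) - log (m + 2))) + Metric.diam C / (m + 1) := by
  set d := Metric.diam C
  set s : ℕ → ℝ := fun n => ‖x (n + 1) - x n‖
  have hstep (n : ℕ) : s (n + 1) ≤ (1 - (1 - ρ) / (n + 2)) * s n + (d / (n + 1) - d / (n + 2)) := by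
    have h := norm_apply_smul_add_sub_apply_smul_add_le hconv hbdd hΦ hT hΦc
      (a := 1 / ((n : ℝ) + 1)) (a' := 1 / (((n + 1 : ℕ) : ℝ) + 1)) (by positivity)
      (by gcongr; simp) (by rw [div_le_one (by positivity)]; simp) (hxC n) (hxC (n + 1))
    rw [← hrec, ← hrec] at h
    convert h using 2 <;> push_cast <;> ring
  have hsm : s m ≤ d := norm_sub_le_diam hbdd (hxC _) (hxC _)
  have hd : 0 ≤ d := Metric.diam_nonneg
  calc ‖x n - T (x n)‖ ≤ s n + d / (n + 1) := by
        have h := norm_sub_apply_le hconv hbdd hΦ hT (a := 1 / ((n : ℝ) + 1)) (by positivity)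
          (by rw [div_le_one (by positivity)]; simp) (hxC n)
        rwa [← hrec, one_div_mul_eq_div] at h
    _ ≤ exp (-(1 - ρ) * (log (n + 2) - log (m + 2))) * s m + (d / (m + 1) - d / (n + 1))
          + d / (n + 1) := by
        gcongr
        exact le_exp_neg_mul_log_sub_log_mul_add (by linarith) (by linarith) hd hstep
          (norm_nonneg _) hmn
    _ ≤ d * exp (-(1 - ρ) * (log (n + 2) - log (m + 2))) + d / (m + 1) := by
        nlinarith [exp_pos (-(1 - ρ) * (log (n + 2) - log (m + 2)))]

end Iteration

theorem exists_le_mul_exp_neg_mul_add_div_lt {β d e : ℝ} (hβ0 : 0 < β) (hβ1 : β ≤ 1) (hd : 0 ≤ d)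
    (he : 0 < e) {n : ℕ} (hn : exp (4 / β * (16 * d / e + 2)) ≤ n) :
    ∃ m ≤ n, d * exp (-β * (log (n + 2) - log (m + 2))) + d / (m + 1) < e := by
  rw [mul_div_assoc] at hn
  set r := d / e
  have hr : 0 ≤ r := by positivity
  have hdr : d = e * r := by simp only [r]; field_simp
  set K := 4 / β * (16 * r + 2)
  set m := ⌈4 * r⌉₊
  have hm : 4 * r ≤ m := Nat.le_ceil _
  have hm' : (m : ℝ) < 4 * r + 1 := Nat.ceil_lt_add_one (by positivity)
  have hβK : β * K = 64 * r + 8 := by simp only [K]; field_simp; ring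
  have hK : 64 * r + 8 ≤ K := by
    rw [← hβK]
    exact mul_le_of_le_one_left (by positivity) hβ1
  have hKn : K + 1 ≤ n := (add_one_le_exp K).trans hn
  refine ⟨m, by exact_mod_cast (show (m : ℝ) ≤ n by linarith), ?_⟩
  have hlogn : K < log (n + 2) := (lt_log_iff_exp_lt (by positivity)).2 (by linarith)
  have hlogm : log (m + 2) ≤ m + 1 := by
    linarith [log_le_sub_one_of_pos (x := m + 2) (by positivity)]
  have hlogm0 : 0 ≤ log (m + 2) := log_nonneg (by linarith [m.cast_nonneg (α := ℝ)])
  set y := β * (log (n + 2) - log (m + 2))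
  have hy : 2 * r ≤ y := by
    have h1 : β * K ≤ β * log (n + 2) := mul_le_mul_of_nonneg_left hlogn.le hβ0.le
    have h2 : β * log (m + 2) ≤ log (m + 2) := mul_le_of_le_one_left hlogm0 hβ1
    have h3 : y = β * log (n + 2) - β * log (m + 2) := mul_sub _ _ _
    linarith
  have hfirst : d * exp (-y) < e / 2 := by
    rw [exp_neg, ← div_eq_mul_inv, div_lt_iff₀ (exp_pos y)]
    nlinarith [add_one_le_exp y]
  have hsecond : d / (m + 1) < e / 4 := by
    rw [div_lt_iff₀ (by positivity), hdr]
    nlinarith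
  rw [neg_mul]
  linarith

theorem stmt_15_general
    {X : Type*} [NormedAddCommGroup X] [NormedSpace ℝ X]
    (C : Set X) (hconv : Convex ℝ C)
    (hbdd : Bornology.IsBounded C)
    (T Φ : X → X) (hΦ : ∀ x ∈ C, Φ x ∈ C)
    (hTne : ∀ x ∈ C, ∀ y ∈ C, ‖T x - T y‖ ≤ ‖x - y‖)
    (ρ : ℝ) (hρ : ρ ∈ Set.Ioo (0 : ℝ) 1)
    (hΦc : ∀ x ∈ C, ∀ y ∈ C, ‖Φ x - Φ y‖ ≤ ρ * ‖x - y‖)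
    (α : ℕ → ℝ) (hαdef : ∀ n : ℕ, α n = 1 / (n + 1))
    (x : ℕ → X) (hxC : ∀ n, x n ∈ C)
    (hrec : ∀ n, x (n + 1) = T (α n • Φ (x n) + (1 - α n) • x n)) :
    Tendsto (fun n => ‖x n - T (x n)‖) atTop (nhds 0) ∧
      ∀ e ∈ Set.Ioo (0 : ℝ) 2, ∀ n : ℕ,
        Real.exp ((4 / (1 - ρ)) * (16 * Metric.diam C / e + 2)) ≤ (n : ℝ) →
        ‖x n - T (x n)‖ < e := by
  obtain ⟨hρ0, hρ1⟩ := hρ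
  obtain rfl : α = fun n : ℕ => 1 / ((n : ℝ) + 1) := funext hαdef
  have hrate : ∀ e ∈ Set.Ioo (0 : ℝ) 2, ∀ n : ℕ,
      exp ((4 / (1 - ρ)) * (16 * Metric.diam C / e + 2)) ≤ n → ‖x n - T (x n)‖ < e := by
    rintro e ⟨he, -⟩ n hn
    obtain ⟨m, hmn, hlt⟩ := exists_le_mul_exp_neg_mul_add_div_lt (by linarith) (by linarith)
      Metric.diam_nonneg he hn
    exact (norm_sub_apply_le_exp_mul_add hconv hbdd hΦ hTne hρ0.le hρ1.le hΦc hxC hrec hmn).trans_lt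
      hlt
  refine ⟨tendsto_order.2 ⟨fun a ha => .of_forall fun n => ha.trans_le (norm_nonneg _),
    fun e he => ?_⟩, hrate⟩
  have he' : min e 1 ∈ Set.Ioo (0 : ℝ) 2 :=
    ⟨lt_min he one_pos, (min_le_right e 1).trans_lt one_lt_two⟩
  filter_upwards [tendsto_natCast_atTop_atTop.eventually_ge_atTop
    (exp ((4 / (1 - ρ)) * (16 * Metric.diam C / min e 1 + 2)))] with n hn
  exact (hrate _ he' n hn).trans_le (min_le_left e 1)

theorem stmt_15
    {X : Type*} [NormedAddCommGroup X] [NormedSpace ℝ X]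
    (C : Set X) (hC : C.Nonempty) (hconv : Convex ℝ C)
    (hbdd : Bornology.IsBounded C) (hdC : 0 < Metric.diam C)
    (T Φ : X → X) (hT : ∀ x ∈ C, T x ∈ C) (hΦ : ∀ x ∈ C, Φ x ∈ C)
    (hTne : ∀ x ∈ C, ∀ y ∈ C, ‖T x - T y‖ ≤ ‖x - y‖)
    (ρ : ℝ) (hρ : ρ ∈ Set.Ioo (0 : ℝ) 1)
    (hΦc : ∀ x ∈ C, ∀ y ∈ C, ‖Φ x - Φ y‖ ≤ ρ * ‖x - y‖)
    (α : ℕ → ℝ) (hαdef : ∀ n : ℕ, α n = 1 / (n + 1))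
    (x : ℕ → X) (hx0 : x 0 ∈ C) (hxC : ∀ n, x n ∈ C)
    (hrec : ∀ n, x (n + 1) = T (α n • Φ (x n) + (1 - α n) • x n)) :
    Tendsto (fun n => ‖x n - T (x n)‖) atTop (nhds 0) ∧
      ∀ e ∈ Set.Ioo (0 : ℝ) 2, ∀ n : ℕ,
        Real.exp ((4 / (1 - ρ)) * (16 * Metric.diam C / e + 2)) ≤ (n : ℝ) →
        ‖x n - T (x n)‖ < e :=
  stmt_15_general C hconv hbdd T Φ hΦ hTne ρ hρ hΦc α hαdef x hxC hrec
end

section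
/- Let H be a Hilbert space, T : H → H a nonexpansive mapping with nonempty fixed point set F = {x : Tx = x}, A : H → H an L-Lipschitzian η-strongly monotone operator, and Φ : H → H a ρ-contraction. Let 0 < γ < η/ρ, and let {α_n} ⊂ (0,1) satisfy lim α_n = 0, ∑ α_n = ∞, and either ∑ |α_{n+1} − α_n| < ∞ or lim α_n/α_{n+1} = 1. Then the sequence defined by x_{n+1} = Tx_n − α_n (A − γΦ)(Tx_n) converges strongly to the unique point q ∈ F satisfying the variational inequality ⟨(A − γΦ)q, q − x⟩ ≤ 0 for all x ∈ F. -/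
/-!
Put `f = A - γ Φ` and `μ = η - γ ρ > 0`. Then `f` is Lipschitz and `μ`-strongly monotone, so for
small `t > 0` the map `x ↦ x - t f x` is a `(1 - t μ / 2)`-contraction. The fixed-point set `F` of
`T` is closed and convex; composed with the metric projection onto `F` this map is a contraction
whose fixed point is the unique solution `q` of the variational inequality.

Along the iteration `‖x n - q‖` stays bounded, and Xu's lemma (`a (n+1) ≤ (1 - t n) a n + t n b n +
c n` with `∑ t n = ∞`, `limsup b n ≤ 0`, `∑ c n < ∞` forces `a n → 0`) gives `‖x (n+1) - x n‖ → 0`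
under either condition on `α`, hence `‖x n - T x n‖ → 0`. Demiclosedness of `I - T` puts every
weak cluster point of `x n` in `F`, so `limsup ⟪f q, q - x n⟫ ≤ 0`, and Xu's lemma applied to
`‖x n - q‖²` concludes.
-/

open Filter Topology
open scoped RealInnerProductSpace

section RealSequences

theorem mul_le_one_of_mul_sq_le {K μ t : ℝ} (hμ : 0 < μ) (hμK : μ ≤ K) (ht0 : 0 ≤ t)
    (htK : t * K ^ 2 ≤ μ) : t * μ ≤ 1 := by
  have : t * μ ^ 2 ≤ μ := (mul_le_mul_of_nonneg_left (pow_le_pow_left₀ hμ.le hμK 2) ht0).trans htK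
  nlinarith

theorem tendsto_prod_Ico_one_sub_of_not_summable {t : ℕ → ℝ} (ht0 : ∀ n, 0 ≤ t n)
    (ht1 : ∀ n, t n ≤ 1) (ht : ¬ Summable t) (N : ℕ) :
    Tendsto (fun n => ∏ k ∈ Finset.Ico N n, (1 - t k)) atTop (𝓝 0) := by
  have hsum : Tendsto (fun n => ∑ k ∈ Finset.Ico N n, t k) atTop atTop := by
    have hshift : ¬ Summable fun k => t (k + N) := (summable_nat_add_iff N).not.mpr ht
    have := ((not_summable_iff_tendsto_nat_atTop_of_nonneg fun k => ht0 (k + N)).mp hshift).comp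
      (tendsto_sub_atTop_nat N)
    refine this.congr fun n => ?_
    simp only [Function.comp_apply, Finset.sum_Ico_eq_sum_range, add_comm N]
  -- `1 - s ≤ exp (-s)` bounds the product by `exp (-∑ t k)`.
  refine squeeze_zero (fun n => Finset.prod_nonneg fun k _ => sub_nonneg.mpr (ht1 k))
    (fun n => ?_) (Real.tendsto_exp_atBot.comp (tendsto_neg_atTop_atBot.comp hsum))
  calc ∏ k ∈ Finset.Ico N n, (1 - t k) ≤ ∏ k ∈ Finset.Ico N n, Real.exp (-t k) :=
        Finset.prod_le_prod (fun k _ => sub_nonneg.mpr (ht1 k))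
          fun k _ => by linarith [Real.add_one_le_exp (-t k)]
    _ = Real.exp (-∑ k ∈ Finset.Ico N n, t k) := by
        rw [← Finset.sum_neg_distrib, Real.exp_sum]

theorem le_prod_mul_add_sum_of_le_one_sub_mul_add {a t b c : ℕ → ℝ} {N : ℕ} {ε : ℝ}
    (ht0 : ∀ n, 0 ≤ t n) (ht1 : ∀ n, t n ≤ 1) (hc : ∀ n, 0 ≤ c n) (hε : 0 ≤ ε)
    (hb : ∀ n, N ≤ n → b n ≤ ε) (h : ∀ n, a (n + 1) ≤ (1 - t n) * a n + t n * b n + c n) :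
    ∀ n, N ≤ n →
      a n ≤ (∏ k ∈ Finset.Ico N n, (1 - t k)) * a N + ε + ∑ k ∈ Finset.Ico N n, c k := by
  intro n hn
  induction n, hn using Nat.le_induction with
  | base => simp [hε]
  | succ n hn ih =>
    rw [Finset.prod_Ico_succ_top hn, Finset.sum_Ico_succ_top hn]
    have hS : 0 ≤ ∑ k ∈ Finset.Ico N n, c k := Finset.sum_nonneg fun k _ => hc k
    have h1 : 0 ≤ 1 - t n := sub_nonneg.mpr (ht1 n)
    nlinarith [h n, mul_le_mul_of_nonneg_left ih h1, mul_le_mul_of_nonneg_left (hb n hn) (ht0 n),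
      mul_nonneg (ht0 n) hS]

theorem tendsto_zero_of_le_one_sub_mul_add {a t b c : ℕ → ℝ} (ha : ∀ n, 0 ≤ a n)
    (ht0 : ∀ n, 0 ≤ t n) (ht1 : ∀ n, t n ≤ 1) (ht : ¬ Summable t)
    (hb : ∀ ε > 0, ∀ᶠ n in atTop, b n ≤ ε) (hc0 : ∀ n, 0 ≤ c n) (hc : Summable c)
    (h : ∀ n, a (n + 1) ≤ (1 - t n) * a n + t n * b n + c n) :
    Tendsto a atTop (𝓝 0) := by
  refine tendsto_order.2 ⟨fun e he => Eventually.of_forall fun n => he.trans_le (ha n),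
    fun ε hε => ?_⟩
  have hε3 : 0 < ε / 3 := by positivity
  obtain ⟨N, hN⟩ := ((hb _ hε3).and ((tendsto_sum_nat_add c).eventually
    (gt_mem_nhds hε3))).exists_forall_of_atTop
  have htail : ∀ n, ∑ k ∈ Finset.Ico N n, c k ≤ ε / 3 := fun n => by
    rw [Finset.sum_Ico_eq_sum_range]
    refine le_trans ?_ (hN N le_rfl).2.le
    simp only [add_comm N]
    exact ((summable_nat_add_iff N).mpr hc).sum_le_tsum _ fun k _ => hc0 _
  have hprod := ((tendsto_prod_Ico_one_sub_of_not_summable ht0 ht1 ht N).mul_const (a N)).eventually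
    (gt_mem_nhds (by rwa [zero_mul]))
  filter_upwards [hprod, eventually_ge_atTop N] with n hn hNn
  have := le_prod_mul_add_sum_of_le_one_sub_mul_add ht0 ht1 hc0 hε3.le
    (fun n hn => (hN n hn).1) h n hNn
  linarith [htail n]

theorem le_max_of_le_one_sub_mul_add {a t : ℕ → ℝ} {B : ℝ} (ht0 : ∀ n, 0 ≤ t n)
    (ht1 : ∀ n, t n ≤ 1) (h : ∀ n, a (n + 1) ≤ (1 - t n) * a n + t n * B) :
    ∀ n, a n ≤ max (a 0) B := by
  intro n
  induction n with
  | zero => exact le_max_left _ _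
  | succ n ih =>
    nlinarith [h n, mul_le_mul_of_nonneg_left ih (sub_nonneg.mpr (ht1 n)),
      mul_le_mul_of_nonneg_left (le_max_right (a 0) B) (ht0 n)]

theorem tendsto_zero_of_le_one_sub_mul_add_abs_sub_mul {d α : ℕ → ℝ} {κ C : ℝ}
    (hd : ∀ n, 0 ≤ d n) (hα0 : ∀ n, 0 < α n) (hκ : 0 < κ) (hακ : ∀ n, α n * κ ≤ 1)
    (hα : ¬ Summable α) (hC : 0 ≤ C)
    (hΔα : (Summable fun n => |α (n + 1) - α n|) ∨
      Tendsto (fun n => α n / α (n + 1)) atTop (𝓝 1))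
    (h : ∀ n, d (n + 1) ≤ (1 - α (n + 1) * κ) * d n + |α (n + 1) - α n| * C) :
    Tendsto d atTop (𝓝 0) := by
  have ht0 : ∀ n, 0 ≤ α (n + 1) * κ := fun n => by have := hα0 (n + 1); positivity
  have ht : ¬ Summable fun n => α (n + 1) * κ := by
    rwa [summable_mul_right_iff hκ.ne', summable_nat_add_iff 1]
  rcases hΔα with hsum | hratio
  · exact tendsto_zero_of_le_one_sub_mul_add hd ht0 (fun n => hακ (n + 1)) ht
      (fun ε hε => Eventually.of_forall fun _ => (le_refl 0).trans hε.le) (b := fun _ => 0)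
      (fun n => by positivity) (hsum.mul_right C) (fun n => by simpa using h n)
  · -- `|α (n+1) - α n| = α (n+1) |1 - α n / α (n+1)|` turns the perturbation into a vanishing `b`.
    have hb : Tendsto (fun n => C / κ * |1 - α n / α (n + 1)|) atTop (𝓝 0) := by
      simpa using ((hratio.const_sub 1).abs.const_mul (C / κ))
    refine tendsto_zero_of_le_one_sub_mul_add hd ht0 (fun n => hακ (n + 1)) ht
      (fun ε hε => hb.eventually (ge_mem_nhds hε)) (fun _ => le_refl 0) summable_zero
      fun n => ?_
    have hpos := hα0 (n + 1)
    have : |α (n + 1) - α n| = α (n + 1) * |1 - α n / α (n + 1)| := by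
      rw [← abs_of_pos hpos, ← abs_mul, abs_of_pos hpos, mul_one_sub, mul_div_cancel₀ _ hpos.ne']
    calc d (n + 1) ≤ (1 - α (n + 1) * κ) * d n + |α (n + 1) - α n| * C := h n
      _ = _ := by rw [this]; field_simp; ring

end RealSequences

section InnerProductSpace

variable {H : Type*} [NormedAddCommGroup H] [InnerProductSpace ℝ H]

theorem norm_add_sq_le_norm_sq_add_two_inner (a b : H) :
    ‖a + b‖ ^ 2 ≤ ‖a‖ ^ 2 + 2 * ⟪b, a + b⟫ := by
  rw [norm_add_sq_real, inner_add_right, real_inner_self_eq_norm_sq, real_inner_comm]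
  nlinarith [sq_nonneg ‖b‖]

theorem norm_sub_smul_sub_le {f : H → H} {K μ t : ℝ} (hμ : 0 < μ) (hμK : μ ≤ K)
    (hf : ∀ x y : H, ‖f x - f y‖ ≤ K * ‖x - y‖)
    (hm : ∀ x y : H, μ * ‖x - y‖ ^ 2 ≤ ⟪f x - f y, x - y⟫)
    (ht0 : 0 ≤ t) (htK : t * K ^ 2 ≤ μ) (x y : H) :
    ‖(x - t • f x) - (y - t • f y)‖ ≤ (1 - t * μ / 2) * ‖x - y‖ := by
  have htμ := mul_le_one_of_mul_sq_le hμ hμK ht0 htK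
  have hfK : ‖f x - f y‖ ^ 2 ≤ K ^ 2 * ‖x - y‖ ^ 2 := by
    rw [← mul_pow]; exact pow_le_pow_left₀ (norm_nonneg _) (hf x y) 2
  -- `‖(x - y) - t (f x - f y)‖² ≤ (1 - 2tμ + t²K²) ‖x - y‖² ≤ (1 - tμ) ‖x - y‖²`
  -- `≤ (1 - tμ/2)² ‖x - y‖²`
  have hsq : ‖(x - y) - t • (f x - f y)‖ ^ 2 ≤ ((1 - t * μ / 2) * ‖x - y‖) ^ 2 := by
    rw [norm_sub_sq_real, real_inner_smul_right, norm_smul, Real.norm_eq_abs, abs_of_nonneg ht0,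
      real_inner_comm]
    nlinarith [hm x y, mul_le_mul_of_nonneg_left hfK (sq_nonneg t),
      mul_le_mul_of_nonneg_right (mul_le_mul_of_nonneg_left htK ht0) (sq_nonneg ‖x - y‖),
      sq_nonneg (t * μ * ‖x - y‖)]
  have hxy : (x - t • f x) - (y - t • f y) = (x - y) - t • (f x - f y) := by
    rw [smul_sub]; abel
  rw [hxy]
  exact (pow_le_pow_iff_left₀ (norm_nonneg _) (by nlinarith [norm_nonneg (x - y)]) two_ne_zero).mp
    hsq

theorem norm_sq_sub_smul_sub_le {f : H → H} {K μ t : ℝ} (hμ : 0 < μ) (hμK : μ ≤ K)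
    (hf : ∀ x y : H, ‖f x - f y‖ ≤ K * ‖x - y‖)
    (hm : ∀ x y : H, μ * ‖x - y‖ ^ 2 ≤ ⟪f x - f y, x - y⟫)
    (ht0 : 0 ≤ t) (htK : t * K ^ 2 ≤ μ) (y q : H) :
    ‖(y - t • f y) - q‖ ^ 2 ≤ (1 - t * μ / 2) * ‖y - q‖ ^ 2 + 2 * t * ⟪f q, q - (y - t • f y)⟫ := by
  have htμ := mul_le_one_of_mul_sq_le hμ hμK ht0 htK
  have hc : 0 ≤ 1 - t * μ / 2 ∧ 1 - t * μ / 2 ≤ 1 := by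
    constructor <;> nlinarith
  have hS := norm_sub_smul_sub_le hμ hμK hf hm ht0 htK y q
  calc ‖(y - t • f y) - q‖ ^ 2
      = ‖((y - t • f y) - (q - t • f q)) + -(t • f q)‖ ^ 2 := by congr 2; abel
    _ ≤ ‖(y - t • f y) - (q - t • f q)‖ ^ 2
          + 2 * ⟪-(t • f q), ((y - t • f y) - (q - t • f q)) + -(t • f q)⟫ :=
        norm_add_sq_le_norm_sq_add_two_inner _ _
    _ ≤ (1 - t * μ / 2) * ‖y - q‖ ^ 2 + 2 * t * ⟪f q, q - (y - t • f y)⟫ := by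
        have h1 : ‖(y - t • f y) - (q - t • f q)‖ ^ 2 ≤ ((1 - t * μ / 2) * ‖y - q‖) ^ 2 :=
          pow_le_pow_left₀ (norm_nonneg _) hS 2
        have h2 : ⟪-(t • f q), ((y - t • f y) - (q - t • f q)) + -(t • f q)⟫
            = t * ⟪f q, q - (y - t • f y)⟫ := by
          rw [show ((y - t • f y) - (q - t • f q)) + -(t • f q) = -(q - (y - t • f y)) by abel,
            inner_neg_neg, real_inner_smul_left]
        nlinarith [mul_le_mul_of_nonneg_right hc.2 (mul_nonneg hc.1 (sq_nonneg ‖y - q‖))]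

theorem norm_sub_smul_apply_sub_le {A Φ : H → H} {L ρ γ : ℝ}
    (hA : ∀ x y : H, ‖A x - A y‖ ≤ L * ‖x - y‖) (hΦ : ∀ x y : H, ‖Φ x - Φ y‖ ≤ ρ * ‖x - y‖)
    (hγ : 0 ≤ γ) (x y : H) :
    ‖(A x - γ • Φ x) - (A y - γ • Φ y)‖ ≤ (L + γ * ρ) * ‖x - y‖ := by
  calc ‖(A x - γ • Φ x) - (A y - γ • Φ y)‖ = ‖(A x - A y) - γ • (Φ x - Φ y)‖ := by
        rw [smul_sub]; congr 1; abel
    _ ≤ L * ‖x - y‖ + γ * (ρ * ‖x - y‖) := by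
        refine (norm_sub_le _ _).trans (add_le_add (hA x y) ?_)
        rw [norm_smul, Real.norm_eq_abs, abs_of_nonneg hγ]
        exact mul_le_mul_of_nonneg_left (hΦ x y) hγ
    _ = (L + γ * ρ) * ‖x - y‖ := by ring

theorem sub_mul_norm_sq_le_inner_sub_smul_apply {A Φ : H → H} {η ρ γ : ℝ}
    (hA : ∀ x y : H, η * ‖x - y‖ ^ 2 ≤ ⟪A x - A y, x - y⟫)
    (hΦ : ∀ x y : H, ‖Φ x - Φ y‖ ≤ ρ * ‖x - y‖) (hγ : 0 ≤ γ) (x y : H) :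
    (η - γ * ρ) * ‖x - y‖ ^ 2 ≤ ⟪(A x - γ • Φ x) - (A y - γ • Φ y), x - y⟫ := by
  have hΦ' : ⟪Φ x - Φ y, x - y⟫ ≤ ρ * ‖x - y‖ ^ 2 :=
    (real_inner_le_norm _ _).trans (by nlinarith [hΦ x y, norm_nonneg (x - y)])
  rw [show (A x - γ • Φ x) - (A y - γ • Φ y) = (A x - A y) - γ • (Φ x - Φ y) by
    rw [smul_sub]; abel, inner_sub_left, real_inner_smul_left]
  nlinarith [hA x y, mul_le_mul_of_nonneg_left hΦ' hγ]

theorem convex_setOf_apply_eq {T : H → H} (hT : ∀ x y : H, ‖T x - T y‖ ≤ ‖x - y‖) :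
    Convex ℝ {x | T x = x} := by
  intro a (ha : T a = a) b (hb : T b = b) s r hs hr hsr
  obtain rfl : s = 1 - r := by linarith
  set z := (1 - r) • a + r • b
  have hza : dist a z = r * dist a b := by
    rw [dist_eq_norm, dist_eq_norm, show a - z = r • (a - b) by module, norm_smul,
      Real.norm_eq_abs, abs_of_nonneg hr]
  have hzb : dist z b = (1 - r) * dist a b := by
    rw [dist_eq_norm, dist_eq_norm, show z - b = (1 - r) • (a - b) by module, norm_smul,
      Real.norm_eq_abs, abs_of_nonneg hs]
  have h1 : dist a (T z) ≤ r * dist a b := by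
    rw [← hza, dist_eq_norm, dist_eq_norm]
    simpa [ha] using hT a z
  have h2 : dist (T z) b ≤ (1 - r) * dist a b := by
    rw [← hzb, dist_eq_norm, dist_eq_norm]
    simpa [hb] using hT z b
  -- Equality in the triangle inequality through `T z` forces `T z` onto the segment, at `z`.
  have htri := dist_triangle a (T z) b
  have hTz := eq_lineMap_of_dist_eq_mul_of_dist_eq_mul (E := H) (x := a) (y := T z) (z := b)
    (r := r) (by linarith) (by linarith)
  change T z = z
  rw [hTz, AffineMap.lineMap_apply]
  simp only [vsub_eq_sub, vadd_eq_add, z]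
  module

theorem norm_sub_apply_sq_le {T : H → H} (hT : ∀ x y : H, ‖T x - T y‖ ≤ ‖x - y‖) (z y : H) :
    ‖z - T z‖ ^ 2 ≤ 2 * ⟪z - y, z - T z⟫ + 2 * ‖y - T y‖ * ‖y - z‖ + ‖y - T y‖ ^ 2 := by
  have hexp : ‖y - T z‖ ^ 2 = ‖y - z‖ ^ 2 - 2 * ⟪z - y, z - T z⟫ + ‖z - T z‖ ^ 2 := by
    rw [show y - T z = (y - z) + (z - T z) by abel, norm_add_sq_real, ← neg_sub z y, inner_neg_left]
    ring
  have htri : ‖y - T z‖ ≤ ‖y - T y‖ + ‖y - z‖ :=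
    (norm_sub_le_norm_sub_add_norm_sub y (T y) (T z)).trans (by linarith [hT y z])
  nlinarith [pow_le_pow_left₀ (norm_nonneg _) htri 2]

/-- Banach–Alaoglu, transported to `H` by the Riesz isomorphism. -/
theorem exists_le_weak_tendsto_of_norm_le [CompleteSpace H] {ι : Type*} (F : Filter ι) [F.NeBot]
    (u : ι → H) {R : ℝ} (hu : ∀ i, ‖u i‖ ≤ R) :
    ∃ z : H, ∃ G ≤ F, G.NeBot ∧ ∀ v : H, Tendsto (fun i => ⟪u i, v⟫) G (𝓝 ⟪z, v⟫) := by
  let D := InnerProductSpace.toDual ℝ H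
  let g : ι → WeakDual ℝ H := fun i => StrongDual.toWeakDual (D (u i))
  let B := WeakDual.toStrongDual ⁻¹' Metric.closedBall (0 : StrongDual ℝ H) R
  have hB : ∀ i, g i ∈ B := fun i => by simpa [B, g, D] using hu i
  obtain ⟨ψ, -, hψ⟩ := (WeakDual.isCompact_closedBall (𝕜 := ℝ) (E := H) 0 R).exists_clusterPt
    (tendsto_principal.mpr (Eventually.of_forall hB) : Tendsto g F (𝓟 B))
  refine ⟨D.symm (WeakDual.toStrongDual ψ), F ⊓ comap g (𝓝 ψ), inf_le_left, ?_, fun v => ?_⟩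
  · rw [← map_neBot_iff g, Filter.push_pull, inf_comm]
    exact hψ
  · have hg : Tendsto g (F ⊓ comap g (𝓝 ψ)) (𝓝 ψ) := tendsto_iff_comap.mpr inf_le_right
    convert ((WeakDual.eval_continuous v).tendsto ψ).comp hg using 2
    · simp [g, D]
    · simp [D]

theorem apply_eq_of_weak_tendsto {T : H → H} (hT : ∀ x y : H, ‖T x - T y‖ ≤ ‖x - y‖)
    {ι : Type*} {G : Filter ι} [G.NeBot] {u : ι → H} {R : ℝ} (hu : ∀ i, ‖u i‖ ≤ R) {z : H}
    (hweak : ∀ v : H, Tendsto (fun i => ⟪u i, v⟫) G (𝓝 ⟪z, v⟫))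
    (hfix : Tendsto (fun i => ‖u i - T (u i)‖) G (𝓝 0)) : T z = z := by
  have hinner : Tendsto (fun i => ⟪z - u i, z - T z⟫) G (𝓝 0) := by
    simpa [inner_sub_left] using ((hweak (z - T z)).const_sub ⟪z, z - T z⟫)
  have hbound : ∀ i, ‖z - T z‖ ^ 2 ≤
      2 * ⟪z - u i, z - T z⟫ + 2 * ‖u i - T (u i)‖ * (R + ‖z‖) + ‖u i - T (u i)‖ ^ 2 := fun i => by
    have := norm_sub_apply_sq_le hT z (u i)
    have : ‖u i - z‖ ≤ R + ‖z‖ := (norm_sub_le _ _).trans (by linarith [hu i])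
    nlinarith [norm_nonneg (u i - T (u i))]
  have hlim : Tendsto (fun i => 2 * ⟪z - u i, z - T z⟫ + 2 * ‖u i - T (u i)‖ * (R + ‖z‖)
      + ‖u i - T (u i)‖ ^ 2) G (𝓝 0) := by
    simpa using ((hinner.const_mul 2).add ((hfix.const_mul 2).mul_const (R + ‖z‖))).add
      (hfix.pow 2)
  have : ‖z - T z‖ ^ 2 ≤ 0 := ge_of_tendsto' hlim hbound
  exact (sub_eq_zero.mp (norm_eq_zero.mp (by nlinarith [norm_nonneg (z - T z)]))).symm

/-- A weak cluster point of an approximate fixed-point sequence is a fixed point, where the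
variational inequality of `q` applies. -/
theorem eventually_inner_sub_le_of_tendsto_norm_sub_apply [CompleteSpace H] {T : H → H}
    (hT : ∀ x y : H, ‖T x - T y‖ ≤ ‖x - y‖) {v q : H} (hq : ∀ y, T y = y → ⟪v, q - y⟫ ≤ 0)
    {u : ℕ → H} {R : ℝ} (hu : ∀ n, ‖u n‖ ≤ R)
    (hfix : Tendsto (fun n => ‖u n - T (u n)‖) atTop (𝓝 0)) :
    ∀ ε > 0, ∀ᶠ n in atTop, ⟪v, q - u n⟫ ≤ ε := by
  intro ε hε
  by_contra hfreq
  rw [not_eventually, frequently_iff_neBot] at hfreq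
  set F := atTop ⊓ 𝓟 {n | ¬ ⟪v, q - u n⟫ ≤ ε}
  obtain ⟨z, G, hGF, hG, hweak⟩ := exists_le_weak_tendsto_of_norm_le F u hu
  have hz : T z = z := apply_eq_of_weak_tendsto hT hu hweak (hfix.mono_left (hGF.trans inf_le_left))
  have hlim : Tendsto (fun n => ⟪v, q - u n⟫) G (𝓝 ⟪v, q - z⟫) := by
    simpa [inner_sub_right, real_inner_comm v] using (hweak v).const_sub ⟪q, v⟫
  have hgt : ∀ᶠ n in G, ε ≤ ⟪v, q - u n⟫ :=
    Eventually.mono (hGF.trans inf_le_right (mem_principal_self _)) fun n hn => (not_le.mp hn).le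
  linarith [ge_of_tendsto hlim hgt, hq z hz]

theorem exists_forall_inner_sub_le_zero [CompleteSpace H] {C : Set H} (hne : C.Nonempty)
    (hcl : IsClosed C) (hconv : Convex ℝ C) (u : H) :
    ∃ v ∈ C, ∀ w ∈ C, ⟪u - v, w - v⟫ ≤ 0 := by
  obtain ⟨v, hv, hmin⟩ := exists_norm_eq_iInf_of_complete_convex hne hcl.isComplete hconv u
  exact ⟨v, hv, (norm_eq_iInf_iff_real_inner_le_zero hconv hv).mp hmin⟩

theorem norm_sub_le_of_forall_inner_sub_le_zero {C : Set H} {u v pu pv : H} (hpu : pu ∈ C)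
    (hpv : pv ∈ C) (hu : ∀ w ∈ C, ⟪u - pu, w - pu⟫ ≤ 0) (hv : ∀ w ∈ C, ⟪v - pv, w - pv⟫ ≤ 0) :
    ‖pu - pv‖ ≤ ‖u - v‖ := by
  have h : ‖pu - pv‖ ^ 2 ≤ ‖u - v‖ * ‖pu - pv‖ := by
    have h1 := hu pv hpv
    have h2 := hv pu hpu
    rw [← neg_sub pu pv, inner_neg_right] at h1
    calc ‖pu - pv‖ ^ 2 ≤ ⟪u - v, pu - pv⟫ := by
          rw [show u - v = (u - pu) - (v - pv) + (pu - pv) by abel, inner_add_left,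
            inner_sub_left, real_inner_self_eq_norm_sq]
          linarith
      _ ≤ ‖u - v‖ * ‖pu - pv‖ := real_inner_le_norm _ _
  nlinarith [norm_nonneg (pu - pv), norm_nonneg (u - v)]

theorem exists_forall_inner_le_zero_of_strongMono [CompleteSpace H] {C : Set H} (hne : C.Nonempty)
    (hcl : IsClosed C) (hconv : Convex ℝ C) {f : H → H} {K μ : ℝ} (hμ : 0 < μ) (hμK : μ ≤ K)
    (hf : ∀ x y : H, ‖f x - f y‖ ≤ K * ‖x - y‖)
    (hm : ∀ x y : H, μ * ‖x - y‖ ^ 2 ≤ ⟪f x - f y, x - y⟫) :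
    ∃ q ∈ C, ∀ y ∈ C, ⟪f q, q - y⟫ ≤ 0 := by
  choose P hPC hP using exists_forall_inner_sub_le_zero hne hcl hconv
  have hK : 0 < K := hμ.trans_le hμK
  set t := μ / K ^ 2
  have ht : 0 < t := by positivity
  have htK : t * K ^ 2 ≤ μ := (div_mul_cancel₀ μ (by positivity)).le
  -- `q` solves the inequality iff it is a fixed point of the contraction `P ∘ (id - t • f)`.
  have hcontr : ContractingWith (1 - t * μ / 2).toNNReal fun x => P (x - t • f x) := by
    refine ⟨Real.toNNReal_lt_one.mpr (by linarith [mul_pos ht hμ]),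
      LipschitzWith.of_dist_le' fun x y => ?_⟩
    rw [dist_eq_norm, dist_eq_norm]
    exact (norm_sub_le_of_forall_inner_sub_le_zero (hPC _) (hPC _) (hP _) (hP _)).trans
      (norm_sub_smul_sub_le hμ hμK hf hm ht.le htK x y)
  have : Nonempty H := ⟨0⟩
  set q := ContractingWith.fixedPoint _ hcontr
  have hq : P (q - t • f q) = q := hcontr.fixedPoint_isFixedPt
  refine ⟨q, hq ▸ hPC _, fun y hy => ?_⟩
  have := hP (q - t • f q) y hy
  rw [hq, sub_sub_cancel_left, inner_neg_left, real_inner_smul_left, ← neg_sub q y,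
    inner_neg_right] at this
  nlinarith

theorem eq_of_inner_sub_le_zero_of_strongMono {f : H → H} {μ : ℝ} (hμ : 0 < μ)
    (hm : ∀ x y : H, μ * ‖x - y‖ ^ 2 ≤ ⟪f x - f y, x - y⟫) {q q' : H}
    (hq : ⟪f q, q - q'⟫ ≤ 0) (hq' : ⟪f q', q' - q⟫ ≤ 0) : q' = q := by
  have h := hm q' q
  have e : ⟪f q, q' - q⟫ = -⟪f q, q - q'⟫ := by rw [← inner_neg_right, neg_sub]
  rw [inner_sub_left, e] at h
  have : ‖q' - q‖ ^ 2 ≤ 0 := by nlinarith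
  exact sub_eq_zero.mp (norm_eq_zero.mp (by nlinarith [norm_nonneg (q' - q)]))

section Iteration

variable {T f : H → H} {K μ : ℝ} {α : ℕ → ℝ} {x : ℕ → H}

theorem norm_iterate_sub_le_max (hT : ∀ x y : H, ‖T x - T y‖ ≤ ‖x - y‖) (hμ : 0 < μ)
    (hμK : μ ≤ K) (hf : ∀ x y : H, ‖f x - f y‖ ≤ K * ‖x - y‖)
    (hm : ∀ x y : H, μ * ‖x - y‖ ^ 2 ≤ ⟪f x - f y, x - y⟫)
    (hα0 : ∀ n, 0 < α n) (hαK : ∀ n, α n * K ^ 2 ≤ μ)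
    (hx : ∀ n, x (n + 1) = T (x n) - α n • f (T (x n))) {q : H} (hq : T q = q) (n : ℕ) :
    ‖x n - q‖ ≤ max ‖x 0 - q‖ (2 * ‖f q‖ / μ) := by
  have hαμ n := mul_le_one_of_mul_sq_le hμ hμK (hα0 n).le (hαK n)
  refine le_max_of_le_one_sub_mul_add (a := fun n => ‖x n - q‖) (t := fun n => α n * μ / 2)
    (fun n => by have := hα0 n; positivity)
    (fun n => by linarith [hαμ n, hα0 n]) (fun n => ?_) n
  have hTx : ‖T (x n) - q‖ ≤ ‖x n - q‖ := by simpa only [hq] using hT (x n) q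
  calc ‖x (n + 1) - q‖
      = ‖((T (x n) - α n • f (T (x n))) - (q - α n • f q)) - α n • f q‖ := by
        rw [hx]; congr 1; abel
    _ ≤ (1 - α n * μ / 2) * ‖T (x n) - q‖ + α n * ‖f q‖ := by
        refine (norm_sub_le _ _).trans (add_le_add
          (norm_sub_smul_sub_le hμ hμK hf hm (hα0 n).le (hαK n) _ _) ?_)
        rw [norm_smul, Real.norm_eq_abs, abs_of_pos (hα0 n)]
    _ ≤ (1 - α n * μ / 2) * ‖x n - q‖ + α n * μ / 2 * (2 * ‖f q‖ / μ) := by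
        rw [show α n * μ / 2 * (2 * ‖f q‖ / μ) = α n * ‖f q‖ by field_simp]
        gcongr
        linarith [hαμ n, hα0 n]

theorem tendsto_norm_iterate_succ_sub (hT : ∀ x y : H, ‖T x - T y‖ ≤ ‖x - y‖) (hμ : 0 < μ)
    (hμK : μ ≤ K) (hf : ∀ x y : H, ‖f x - f y‖ ≤ K * ‖x - y‖)
    (hm : ∀ x y : H, μ * ‖x - y‖ ^ 2 ≤ ⟪f x - f y, x - y⟫)
    (hα0 : ∀ n, 0 < α n) (hαK : ∀ n, α n * K ^ 2 ≤ μ) (hα : ¬ Summable α)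
    (hΔα : (Summable fun n => |α (n + 1) - α n|) ∨
      Tendsto (fun n => α n / α (n + 1)) atTop (𝓝 1))
    (hx : ∀ n, x (n + 1) = T (x n) - α n • f (T (x n))) {C : ℝ}
    (hC : ∀ n, ‖f (T (x n))‖ ≤ C) :
    Tendsto (fun n => ‖x (n + 1) - x n‖) atTop (𝓝 0) := by
  refine tendsto_zero_of_le_one_sub_mul_add_abs_sub_mul (fun n => norm_nonneg _) hα0
    (half_pos hμ) (fun n => by linarith [mul_le_one_of_mul_sq_le hμ hμK (hα0 n).le (hαK n)])
    hα ((norm_nonneg _).trans (hC 0)) hΔα fun n => ?_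
  obtain ⟨y, hy⟩ : ∃ y : ℕ → H, ∀ n, T (x n) = y n := ⟨fun n => T (x n), fun _ => rfl⟩
  have hxy n : x (n + 1) = y n - α n • f (y n) := by rw [hx, hy]
  have hc : 0 ≤ 1 - α (n + 1) * (μ / 2) := by
    linarith [mul_le_one_of_mul_sq_le hμ hμK (hα0 (n + 1)).le (hαK (n + 1)), hα0 (n + 1)]
  calc ‖x (n + 1 + 1) - x (n + 1)‖
      = ‖((y (n + 1) - α (n + 1) • f (y (n + 1))) - (y n - α (n + 1) • f (y n)))
          + (α n - α (n + 1)) • f (y n)‖ := by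
        rw [hxy, hxy, sub_smul]; congr 1; abel
    _ ≤ (1 - α (n + 1) * (μ / 2)) * ‖y (n + 1) - y n‖ + |α (n + 1) - α n| * C := by
        refine (norm_add_le _ _).trans (add_le_add ?_ ?_)
        · simpa only [mul_div_assoc] using
            norm_sub_smul_sub_le hμ hμK hf hm (hα0 (n + 1)).le (hαK (n + 1)) _ _
        · rw [norm_smul, Real.norm_eq_abs, abs_sub_comm]
          exact mul_le_mul_of_nonneg_left (hy n ▸ hC n) (abs_nonneg _)
    _ ≤ (1 - α (n + 1) * (μ / 2)) * ‖x (n + 1) - x n‖ + |α (n + 1) - α n| * C := by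
        gcongr
        rw [← hy, ← hy]
        exact hT _ _

theorem norm_sq_iterate_succ_sub_le (hT : ∀ x y : H, ‖T x - T y‖ ≤ ‖x - y‖) (hμ : 0 < μ)
    (hμK : μ ≤ K) (hf : ∀ x y : H, ‖f x - f y‖ ≤ K * ‖x - y‖)
    (hm : ∀ x y : H, μ * ‖x - y‖ ^ 2 ≤ ⟪f x - f y, x - y⟫)
    (hα0 : ∀ n, 0 < α n) (hαK : ∀ n, α n * K ^ 2 ≤ μ)
    (hx : ∀ n, x (n + 1) = T (x n) - α n • f (T (x n))) {q : H} (hq : T q = q) (n : ℕ) :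
    ‖x (n + 1) - q‖ ^ 2 ≤ (1 - α n * μ / 2) * ‖x n - q‖ ^ 2 + 2 * α n * ⟪f q, q - x (n + 1)⟫ := by
  have hTx : ‖T (x n) - q‖ ≤ ‖x n - q‖ := by simpa only [hq] using hT (x n) q
  have hc : 0 ≤ 1 - α n * μ / 2 := by
    linarith [mul_le_one_of_mul_sq_le hμ hμK (hα0 n).le (hαK n), hα0 n]
  calc ‖x (n + 1) - q‖ ^ 2
      ≤ (1 - α n * μ / 2) * ‖T (x n) - q‖ ^ 2 + 2 * α n * ⟪f q, q - x (n + 1)⟫ := by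
        simpa only [← hx] using norm_sq_sub_smul_sub_le hμ hμK hf hm (hα0 n).le (hαK n) (T (x n)) q
    _ ≤ (1 - α n * μ / 2) * ‖x n - q‖ ^ 2 + 2 * α n * ⟪f q, q - x (n + 1)⟫ := by gcongr

theorem tendsto_iterate_of_forall_mul_sq_le [CompleteSpace H]
    (hT : ∀ x y : H, ‖T x - T y‖ ≤ ‖x - y‖) (hμ : 0 < μ)
    (hμK : μ ≤ K) (hf : ∀ x y : H, ‖f x - f y‖ ≤ K * ‖x - y‖)
    (hm : ∀ x y : H, μ * ‖x - y‖ ^ 2 ≤ ⟪f x - f y, x - y⟫)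
    (hα0 : ∀ n, 0 < α n) (hαK : ∀ n, α n * K ^ 2 ≤ μ) (hα1 : Tendsto α atTop (𝓝 0))
    (hα : ¬ Summable α)
    (hΔα : (Summable fun n => |α (n + 1) - α n|) ∨
      Tendsto (fun n => α n / α (n + 1)) atTop (𝓝 1))
    (hx : ∀ n, x (n + 1) = T (x n) - α n • f (T (x n))) {q : H} (hq : T q = q)
    (hqVI : ∀ y, T y = y → ⟪f q, q - y⟫ ≤ 0) :
    Tendsto x atTop (𝓝 q) := by
  set M := max ‖x 0 - q‖ (2 * ‖f q‖ / μ)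
  have hM n : ‖x n - q‖ ≤ M := norm_iterate_sub_le_max hT hμ hμK hf hm hα0 hαK hx hq n
  have hC n : ‖f (T (x n))‖ ≤ K * M + ‖f q‖ := by
    have hTx : ‖T (x n) - q‖ ≤ M := by simpa only [hq] using (hT (x n) q).trans (hM n)
    calc ‖f (T (x n))‖ ≤ ‖f q‖ + ‖f (T (x n)) - f q‖ := norm_le_norm_add_norm_sub' _ _
      _ ≤ K * M + ‖f q‖ := by
        nlinarith [hf (T (x n)) q, mul_le_mul_of_nonneg_left hTx (hμ.le.trans hμK)]
  have hreg := tendsto_norm_iterate_succ_sub hT hμ hμK hf hm hα0 hαK hα hΔα hx hC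
  have hfix : Tendsto (fun n => ‖x n - T (x n)‖) atTop (𝓝 0) := by
    refine squeeze_zero (fun n => norm_nonneg _) (fun n => ?_)
      (by simpa using hreg.add (hα1.mul_const (K * M + ‖f q‖)))
    calc ‖x n - T (x n)‖ = ‖-(x (n + 1) - x n) - α n • f (T (x n))‖ := by
          rw [hx]; congr 1; abel
      _ ≤ ‖x (n + 1) - x n‖ + α n * (K * M + ‖f q‖) := by
          refine (norm_sub_le _ _).trans ?_
          rw [norm_neg, norm_smul, Real.norm_eq_abs, abs_of_pos (hα0 n)]
          exact add_le_add le_rfl (mul_le_mul_of_nonneg_left (hC n) (hα0 n).le)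
  have hlimsup := eventually_inner_sub_le_of_tendsto_norm_sub_apply hT hqVI
    (fun n => by linarith [norm_le_norm_add_norm_sub' (x n) q, hM n] : ∀ n, ‖x n‖ ≤ ‖q‖ + M) hfix
  have hsq : Tendsto (fun n => ‖x n - q‖ ^ 2) atTop (𝓝 0) := by
    refine tendsto_zero_of_le_one_sub_mul_add (t := fun n => α n * μ / 2)
      (b := fun n => 4 / μ * ⟪f q, q - x (n + 1)⟫) (fun n => sq_nonneg _)
      (fun n => by have := hα0 n; positivity)
      (fun n => by linarith [mul_le_one_of_mul_sq_le hμ hμK (hα0 n).le (hαK n), hα0 n])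
      (by rwa [summable_div_const_iff two_ne_zero, summable_mul_right_iff hμ.ne'])
      (fun ε hε => ?_) (fun _ => le_rfl) summable_zero (fun n => ?_)
    · filter_upwards [(tendsto_add_atTop_nat 1).eventually (hlimsup (μ * ε / 4) (by positivity))]
        with n hn
      rw [div_mul_eq_mul_div, div_le_iff₀ hμ]
      linarith
    · rw [show α n * μ / 2 * (4 / μ * ⟪f q, q - x (n + 1)⟫)
        = 2 * α n * ⟪f q, q - x (n + 1)⟫ by field_simp; ring, add_zero]
      exact norm_sq_iterate_succ_sub_le hT hμ hμK hf hm hα0 hαK hx hq n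
  rw [tendsto_iff_norm_sub_tendsto_zero]
  simpa [Real.sqrt_sq (norm_nonneg _)] using hsq.sqrt

theorem tendsto_iterate [CompleteSpace H]
    (hT : ∀ x y : H, ‖T x - T y‖ ≤ ‖x - y‖) (hμ : 0 < μ)
    (hμK : μ ≤ K) (hf : ∀ x y : H, ‖f x - f y‖ ≤ K * ‖x - y‖)
    (hm : ∀ x y : H, μ * ‖x - y‖ ^ 2 ≤ ⟪f x - f y, x - y⟫)
    (hα0 : ∀ n, 0 < α n) (hα1 : Tendsto α atTop (𝓝 0)) (hα : ¬ Summable α)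
    (hΔα : (Summable fun n => |α (n + 1) - α n|) ∨
      Tendsto (fun n => α n / α (n + 1)) atTop (𝓝 1))
    (hx : ∀ n, x (n + 1) = T (x n) - α n • f (T (x n))) {q : H} (hq : T q = q)
    (hqVI : ∀ y, T y = y → ⟪f q, q - y⟫ ≤ 0) :
    Tendsto x atTop (𝓝 q) := by
  have hK : 0 < K ^ 2 := pow_pos (hμ.trans_le hμK) 2
  obtain ⟨N, hN⟩ := (hα1.eventually (ge_mem_nhds (div_pos hμ hK))).exists_forall_of_atTop
  have hshift : Tendsto (fun n => n + N) atTop atTop := tendsto_add_atTop_nat N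
  rw [← tendsto_add_atTop_iff_nat N]
  refine tendsto_iterate_of_forall_mul_sq_le (α := fun n => α (n + N)) hT hμ hμK hf hm
    (fun n => hα0 _) (fun n => (le_div_iff₀ hK).mp (hN _ le_add_self)) (hα1.comp hshift)
    ((summable_nat_add_iff N).not.mpr hα) ?_
    (fun n => by simpa only [add_right_comm] using hx (n + N)) hq hqVI
  refine hΔα.imp (fun h => ?_) (fun h => ?_)
  · simpa only [add_right_comm] using (summable_nat_add_iff N).mpr h
  · simpa only [Function.comp_def, add_right_comm] using h.comp hshift

end Iteration

end InnerProductSpace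

theorem stmt_19_general
    {H : Type*} [NormedAddCommGroup H] [InnerProductSpace ℝ H] [CompleteSpace H]
    (T : H → H) (hTne : ∀ x y : H, ‖T x - T y‖ ≤ ‖x - y‖)
    (hF : ∃ x : H, T x = x)
    (A : H → H)
    (L : ℝ) (hL : ∀ x y : H, ‖A x - A y‖ ≤ L * ‖x - y‖)
    (η : ℝ)
    (hmono : ∀ x y : H, η * ‖x - y‖ ^ 2 ≤ ⟪A x - A y, x - y⟫)
    (Φ : H → H) (ρ : ℝ) (hρ : ρ ∈ Set.Ioo (0 : ℝ) 1)
    (hΦ : ∀ x y : H, ‖Φ x - Φ y‖ ≤ ρ * ‖x - y‖)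
    (γ : ℝ) (hγ0 : 0 < γ) (hγ : γ < η / ρ)
    (α : ℕ → ℝ) (hα : ∀ n, α n ∈ Set.Ioo (0 : ℝ) 1)
    (hα1 : Tendsto α atTop (nhds 0))
    (hα2 : ¬ Summable α)
    (hα3 : (Summable fun n => |α (n + 1) - α n|) ∨
      Tendsto (fun n => α n / α (n + 1)) atTop (nhds 1))
    (x : ℕ → H)
    (hrec : ∀ n, x (n + 1) = T (x n) - α n • (A (T (x n)) - γ • Φ (T (x n)))) :
    ∃ q : H, (T q = q ∧ ∀ y : H, T y = y → ⟪A q - γ • Φ q, q - y⟫ ≤ 0) ∧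
      (∀ q' : H, (T q' = q' ∧ ∀ y : H, T y = y → ⟪A q' - γ • Φ q', q' - y⟫ ≤ 0)
        → q' = q) ∧
      Tendsto x atTop (nhds q) := by
  have hμ : 0 < η - γ * ρ := by linarith [(lt_div_iff₀ hρ.1).mp hγ]
  have hf x y := (norm_sub_smul_apply_sub_le hL hΦ hγ0.le x y).trans
    (mul_le_mul_of_nonneg_right (le_max_left _ (η - γ * ρ)) (norm_nonneg (x - y)))
  have hm := sub_mul_norm_sq_le_inner_sub_smul_apply hmono hΦ hγ0.le
  have hTc : Continuous T := (LipschitzWith.of_dist_le' (K := 1) fun x y => by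
    simpa only [dist_eq_norm, one_mul] using hTne x y).continuous
  obtain ⟨q, hq, hqVI⟩ := exists_forall_inner_le_zero_of_strongMono hF
    (isClosed_eq hTc continuous_id) (convex_setOf_apply_eq hTne) hμ (le_max_right _ _) hf hm
  refine ⟨q, ⟨hq, hqVI⟩, fun q' ⟨hq', hq'VI⟩ =>
    eq_of_inner_sub_le_zero_of_strongMono hμ hm (hqVI q' hq') (hq'VI q hq), ?_⟩
  exact tendsto_iterate hTne hμ (le_max_right _ _) hf hm (fun n => (hα n).1) hα1 hα2 hα3 hrec hq
    hqVI

theorem stmt_19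
    {H : Type*} [NormedAddCommGroup H] [InnerProductSpace ℝ H] [CompleteSpace H]
    (T : H → H) (hTne : ∀ x y : H, ‖T x - T y‖ ≤ ‖x - y‖)
    (hF : ∃ x : H, T x = x)
    (A : H → H)
    (L : ℝ) (hL : ∀ x y : H, ‖A x - A y‖ ≤ L * ‖x - y‖)
    (η : ℝ) (hη : 0 < η)
    (hmono : ∀ x y : H, η * ‖x - y‖ ^ 2 ≤ ⟪A x - A y, x - y⟫)
    (Φ : H → H) (ρ : ℝ) (hρ : ρ ∈ Set.Ioo (0 : ℝ) 1)
    (hΦ : ∀ x y : H, ‖Φ x - Φ y‖ ≤ ρ * ‖x - y‖)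
    (γ : ℝ) (hγ0 : 0 < γ) (hγ : γ < η / ρ)
    (α : ℕ → ℝ) (hα : ∀ n, α n ∈ Set.Ioo (0 : ℝ) 1)
    (hα1 : Tendsto α atTop (nhds 0))
    (hα2 : ¬ Summable α)
    (hα3 : (Summable fun n => |α (n + 1) - α n|) ∨
      Tendsto (fun n => α n / α (n + 1)) atTop (nhds 1))
    (x : ℕ → H)
    (hrec : ∀ n, x (n + 1) = T (x n) - α n • (A (T (x n)) - γ • Φ (T (x n)))) :
    ∃ q : H, (T q = q ∧ ∀ y : H, T y = y → ⟪A q - γ • Φ q, q - y⟫ ≤ 0) ∧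
      (∀ q' : H, (T q' = q' ∧ ∀ y : H, T y = y → ⟪A q' - γ • Φ q', q' - y⟫ ≤ 0)
        → q' = q) ∧
      Tendsto x atTop (nhds q) :=
  stmt_19_general T hTne hF A L hL η hmono Φ ρ hρ hΦ γ hγ0 hγ α hα hα1 hα2 hα3 x hrec
end
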